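/- arXiv:2208.06184 — 5 statements merged into one kernel-verified Lean document; each statement's English description precedes it below -/
import Mathlib

section
/- Let f and g be real polynomials with g odd and x·g(x) > 0 for all x ≠ 0. Then condition (iv) holds, i.e. F(x₁) = F(x₂) whenever x₁ < 0 < x₂ and G(x₁) = G(x₂), if and only if f is an odd polynomial. -/
/-!
Since `g` is odd, `G` is even, and since `g > 0` on `(0, ∞)`, `G` is strictly increasing there.
Hence `G x₁ = G x₂` with `x₁ < 0 < x₂` happens exactly when `x₂ = -x₁`, so condition (iv) says
that `F` is even. A primitive of an odd function is even, and conversely differentiating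
`F (-x) = F x` shows that `f` is odd.
-/

open Set intervalIntegral

def ConditionIV (F G : ℝ → ℝ) : Prop :=
  ∀ x₁ x₂ : ℝ, x₁ < 0 → 0 < x₂ → G x₁ = G x₂ → F x₁ = F x₂

lemma conditionIV_iff_even {F G : ℝ → ℝ} (hG : ∀ x, G (-x) = G x) (hinj : InjOn G (Ici 0)) :
    ConditionIV F G ↔ ∀ x, F (-x) = F x := by
  constructor
  · intro hF x
    rcases lt_trichotomy x 0 with hx | rfl | hx
    · exact (hF x (-x) hx (neg_pos.mpr hx) (hG x).symm).symm
    · rw [neg_zero]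
    · exact hF (-x) x (neg_neg_iff_pos.mpr hx) hx (hG x)
  · intro hF x₁ x₂ hx₁ hx₂ hGx
    have hx : -x₁ = x₂ :=
      hinj (mem_Ici.mpr (neg_nonneg.mpr hx₁.le)) (mem_Ici.mpr hx₂.le) ((hG x₁).trans hGx)
    rw [← hx, hF]

lemma integral_zero_neg_of_odd {f : ℝ → ℝ} (hf : ∀ x, f (-x) = -f x) (x : ℝ) :
    ∫ t in (0 : ℝ)..-x, f t = ∫ t in (0 : ℝ)..x, f t := by
  have h := integral_comp_neg (a := 0) (b := x) f
  simp only [hf, intervalIntegral.integral_neg, neg_zero] at h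
  rw [integral_symm 0 (-x)] at h
  linarith

lemma odd_of_integral_zero_neg {f : ℝ → ℝ} (hf : Continuous f)
    (h : ∀ x, ∫ t in (0 : ℝ)..-x, f t = ∫ t in (0 : ℝ)..x, f t) (x : ℝ) : f (-x) = -f x := by
  have hderiv : deriv (fun y ↦ ∫ t in (0 : ℝ)..-y, f t) x = -f (-x) := by
    rw [deriv_comp_neg (fun y ↦ ∫ t in (0 : ℝ)..y, f t), hf.deriv_integral]
  rw [funext h, hf.deriv_integral] at hderiv
  linarith

lemma strictMonoOn_integral_zero_Ici {g : ℝ → ℝ} (hg : Continuous g)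
    (hpos : ∀ x, 0 < x → 0 < g x) :
    StrictMonoOn (fun x ↦ ∫ t in (0 : ℝ)..x, g t) (Ici 0) := by
  intro a ha b _ hab
  have hint : ∀ c d : ℝ, IntervalIntegrable g MeasureTheory.volume c d :=
    fun c d ↦ hg.intervalIntegrable c d
  have : 0 < ∫ t in a..b, g t :=
    intervalIntegral_pos_of_pos_on (hint a b)
      (fun t ht ↦ hpos t (lt_of_le_of_lt (mem_Ici.mp ha) ht.1)) hab
  rw [← integral_interval_sub_left (hint 0 b) (hint 0 a)] at this
  exact sub_pos.mp this

theorem condition_iv_iff_f_odd (f g : Polynomial ℝ)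
    (hgodd : ∀ x : ℝ, g.eval (-x) = -g.eval x)
    (hgpos : ∀ x : ℝ, x ≠ 0 → x * g.eval x > 0)
    (F G : ℝ → ℝ)
    (hF : ∀ x : ℝ, F x = ∫ t in (0 : ℝ)..x, f.eval t)
    (hG : ∀ x : ℝ, G x = ∫ t in (0 : ℝ)..x, g.eval t) :
    (∀ x₁ x₂ : ℝ, x₁ < 0 → 0 < x₂ → G x₁ = G x₂ → F x₁ = F x₂) ↔
      (∀ x : ℝ, f.eval (-x) = -f.eval x) := by
  obtain rfl : F = fun x ↦ ∫ t in (0 : ℝ)..x, f.eval t := funext hF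
  obtain rfl : G = fun x ↦ ∫ t in (0 : ℝ)..x, g.eval t := funext hG
  have hGinj := (strictMonoOn_integral_zero_Ici g.continuous
    fun x hx ↦ pos_of_mul_pos_right (hgpos x hx.ne') hx.le).injOn
  refine (conditionIV_iff_even (integral_zero_neg_of_odd hgodd) hGinj).trans ?_
  exact ⟨odd_of_integral_zero_neg f.continuous, integral_zero_neg_of_odd (f := (f.eval ·))⟩
end

section
/- For every real c with 0 < |c| < 2√2, the quintic Liénard system x' = y, y' = -(x³ + x⁵) - c·x·y has a global center of nilpotent type at the origin. -/
/-- `γ : ℝ → ℝ × ℝ` is a solution of the Liénard system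
`x' = y`, `y' = -g(x) - f(x)·y` on all of `ℝ`. -/
def IsLienardSolution (g f : ℝ → ℝ) (γ : ℝ → ℝ × ℝ) : Prop :=
  ∀ t : ℝ,
    HasDerivAt (fun τ => (γ τ).1) ((γ t).2) t ∧
    HasDerivAt (fun τ => (γ τ).2) (-(g ((γ t).1)) - f ((γ t).1) * (γ t).2) t

/-- The origin is a global center of the Liénard system `x' = y, y' = -g(x) - f(x)·y`. -/
def IsGlobalCenter (g f : ℝ → ℝ) : Prop :=
  g 0 = 0 ∧
  ∀ p : ℝ × ℝ, p ≠ (0, 0) →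
    ∃ T > (0 : ℝ), ∃ γ : ℝ → ℝ × ℝ,
      IsLienardSolution g f γ ∧ γ 0 = p ∧ (∀ t, γ (t + T) = γ t) ∧ ¬(∀ t, γ t = p)

open Set Real Filter Topology
open scoped NNReal

/-!
The energy `E = y²/2 + x⁴/4 + x⁶/6` satisfies `E' = -c x y²`, and the angle `A = arctan (-y/x²)`
of the blow-up at the nilpotent origin satisfies `A' ≥ δ x` with `δ = (8 - c²)/12 > 0` while
`x > 0`. Hence `E · exp (∓k A)`, with `k = 2|c|/δ`, are monotone there: during a passage through
the half-plane `x > 0` the energy changes by a factor at most `exp (k π)`, and the passage ends on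
the `y`-axis in finite time. The system is reversible under `(x, y, t) ↦ (-x, y, -t)`, so an orbit
meeting the `y`-axis at two different times is closed. The symmetries `(x, y, t) ↦ (x, -y, -t)`
and `(x, y) ↦ (-x, -y)`, which exchange `c` and `-c`, reduce every starting point to an orbit
with such a passage forwards and backwards in time. Solutions are built for the vector field
composed with the clamp onto a large box, which by the energy bound they never leave.
-/

section RealInterval

variable {a b : ℝ}

theorem monotoneOn_Icc_of_hasDerivAt_nonneg {f f' : ℝ → ℝ}
    (hf : ∀ t ∈ Icc a b, HasDerivAt f (f' t) t) (hf' : ∀ t ∈ Ioo a b, 0 ≤ f' t) :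
    MonotoneOn f (Icc a b) := by
  refine monotoneOn_of_hasDerivWithinAt_nonneg (f' := f') (convex_Icc a b)
    (HasDerivAt.continuousOn hf) (fun t ht => ?_) (fun t ht => ?_)
  · exact (hf t (interior_subset ht)).hasDerivWithinAt
  · exact hf' t (by rwa [interior_Icc] at ht)

theorem le_mul_exp_of_deriv_le_mul {F A F' A' : ℝ → ℝ} {κ : ℝ} (hab : a ≤ b)
    (hF : ∀ t ∈ Icc a b, HasDerivAt F (F' t) t) (hA : ∀ t ∈ Icc a b, HasDerivAt A (A' t) t)
    (h : ∀ t ∈ Ioo a b, F' t ≤ κ * F t * A' t) : F b ≤ F a * exp (κ * (A b - A a)) := by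
  have hmono : MonotoneOn (fun t => -(F t * exp (-(κ * A t)))) (Icc a b) := by
    refine monotoneOn_Icc_of_hasDerivAt_nonneg
      (fun t ht => ((hF t ht).mul ((hA t ht).const_mul κ).neg.exp).neg) (fun t ht => ?_)
    simp only [Pi.neg_apply]
    nlinarith [mul_le_mul_of_nonneg_left (h t ht) (exp_pos (-(κ * A t))).le]
  have key : F b * exp (-(κ * A b)) ≤ F a * exp (-(κ * A a)) :=
    neg_le_neg_iff.mp (hmono ⟨le_rfl, hab⟩ ⟨hab, le_rfl⟩ hab)
  calc F b = F b * exp (-(κ * A b)) * exp (κ * A b) := by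
        rw [mul_assoc, ← exp_add, neg_add_cancel, exp_zero, mul_one]
    _ ≤ F a * exp (-(κ * A a)) * exp (κ * A b) := mul_le_mul_of_nonneg_right key (exp_pos _).le
    _ = F a * exp (κ * (A b - A a)) := by
        rw [mul_assoc, ← exp_add]; ring_nf

theorem mul_exp_le_of_mul_le_deriv {F A F' A' : ℝ → ℝ} {κ : ℝ} (hab : a ≤ b)
    (hF : ∀ t ∈ Icc a b, HasDerivAt F (F' t) t) (hA : ∀ t ∈ Icc a b, HasDerivAt A (A' t) t)
    (h : ∀ t ∈ Ioo a b, κ * F t * A' t ≤ F' t) : F a * exp (κ * (A b - A a)) ≤ F b := by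
  have := le_mul_exp_of_deriv_le_mul (F := fun t => -F t) (F' := fun t => -F' t) (κ := κ) hab
    (fun t ht => (hF t ht).neg) hA (fun t ht => by linarith [h t ht])
  linarith

theorem ContinuousOn.forall_mem_Icc_lt_of_bootstrap {u : ℝ → ℝ} {R : ℝ}
    (hu : ContinuousOn u (Icc a b)) (ha : u a < R)
    (h : ∀ τ ∈ Ioc a b, (∀ s ∈ Icc a τ, u s ≤ R) → u τ < R) :
    ∀ s ∈ Icc a b, u s < R := by
  by_contra! hbad
  set S := {s ∈ Icc a b | R ≤ u s}
  have hS : IsClosed S := isClosed_Icc.isClosed_le continuousOn_const hu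
  have hSb : BddBelow S := ⟨a, fun s hs => hs.1.1⟩
  obtain ⟨τ, hτS⟩ : S.Nonempty := hbad
  have hτ : sInf S ∈ S := hS.csInf_mem ⟨τ, hτS⟩ hSb
  have haτ : a < sInf S := lt_of_le_of_ne hτ.1.1 (by rintro h; rw [← h] at hτ; linarith [hτ.2])
  have hbelow : ∀ s ∈ Ico a (sInf S), u s ≤ R := fun s hs =>
    not_lt.mp fun hs' => hs.2.not_ge (csInf_le hSb ⟨⟨hs.1, hs.2.le.trans hτ.1.2⟩, hs'.le⟩)
  have hupto : ∀ s ∈ Icc a (sInf S), u s ≤ R := by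
    rw [← closure_Ico haτ.ne]
    refine le_on_closure hbelow (hu.mono ?_) continuousOn_const
    rw [closure_Ico haτ.ne]
    exact Icc_subset_Icc_right hτ.1.2
  exact (h _ ⟨haτ, hτ.1.2⟩ hupto).not_ge hτ.2

theorem Continuous.exists_first_zero {f : ℝ → ℝ} (hf : Continuous f)
    (hpos : ∀ᶠ s in 𝓝[>] a, 0 < f s) (hab : a < b) (hb : f b ≤ 0) :
    ∃ T ∈ Ioc a b, f T = 0 ∧ ∀ s ∈ Ioo a T, 0 < f s := by
  obtain ⟨a', ha', hsub⟩ := (mem_nhdsGT_iff_exists_Ioc_subset).mp hpos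
  set S := {s ∈ Icc (min a' b) b | f s ≤ 0}
  have hS : IsClosed S := isClosed_Icc.isClosed_le hf.continuousOn continuousOn_const
  have hSb : BddBelow S := ⟨min a' b, fun s hs => hs.1.1⟩
  have hT : sInf S ∈ S := hS.csInf_mem ⟨b, ⟨min_le_right _ _, le_rfl⟩, hb⟩ hSb
  have haT : a < sInf S := (lt_min (mem_Ioi.mp ha') hab).trans_le hT.1.1
  have hpos' : ∀ s ∈ Ioo a (sInf S), 0 < f s := by
    intro s hs
    by_cases hsa' : s ≤ a'
    · exact hsub ⟨hs.1, hsa'⟩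
    · refine not_le.mp fun hfs => hs.2.not_ge (csInf_le hSb ⟨⟨?_, hs.2.le.trans hT.1.2⟩, hfs⟩)
      exact (min_le_left _ _).trans (not_le.mp hsa').le
  refine ⟨sInf S, ⟨haT, hT.1.2⟩, le_antisymm hT.2 ?_, hpos'⟩
  refine le_on_closure (fun s hs => (hpos' s hs).le) continuousOn_const hf.continuousOn ?_
  rw [closure_Ioo haT.ne]
  exact right_mem_Icc.mpr haT.le

end RealInterval

theorem HasDerivAt.fst {E F : Type*} [NormedAddCommGroup E] [NormedSpace ℝ E]
    [NormedAddCommGroup F] [NormedSpace ℝ F] {γ : ℝ → E × F} {v : E × F} {t : ℝ}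
    (h : HasDerivAt γ v t) : HasDerivAt (fun s => (γ s).1) v.1 t :=
  (ContinuousLinearMap.fst ℝ E F).hasFDerivAt.comp_hasDerivAt t h

theorem HasDerivAt.snd {E F : Type*} [NormedAddCommGroup E] [NormedSpace ℝ E]
    [NormedAddCommGroup F] [NormedSpace ℝ F] {γ : ℝ → E × F} {v : E × F} {t : ℝ}
    (h : HasDerivAt γ v t) : HasDerivAt (fun s => (γ s).2) v.2 t :=
  (ContinuousLinearMap.snd ℝ E F).hasFDerivAt.comp_hasDerivAt t h

theorem HasDerivAt.eventually_pos_nhdsGT {f : ℝ → ℝ} {f' x₀ : ℝ} (hf : HasDerivAt f f' x₀)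
    (hf' : 0 < f') (h₀ : f x₀ = 0) : ∀ᶠ x in 𝓝[>] x₀, 0 < f x := by
  filter_upwards [nhdsGT_le_nhdsNE x₀ ((hasDerivAt_iff_tendsto_slope.mp hf).eventually
    (eventually_gt_nhds hf')), self_mem_nhdsWithin] with x hslope hx
  exact pos_of_slope_pos hx hslope h₀

section Reversibility

variable {E F : Type*} [NormedAddCommGroup E] [NormedSpace ℝ E] [NormedAddCommGroup F]
  [NormedSpace ℝ F] {v : E → E} {γ : ℝ → E}

theorem IsIntegralCurve.clm_comp_reverse {v' : F → F} (L : E →L[ℝ] F)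
    (hL : ∀ x, v' (L x) = -L (v x)) (hγ : IsIntegralCurve γ (fun _ => v)) (s : ℝ) :
    IsIntegralCurve (fun t => L (γ (s - t))) (fun _ => v') := by
  intro t
  have hrev : HasDerivAt (fun t => γ (s - t)) (-v (γ (s - t))) t := by
    simpa [Function.comp_def] using (hγ (s - t)).scomp t ((hasDerivAt_id t).const_sub s)
  simpa [hL, Function.comp_def] using L.hasFDerivAt.comp_hasDerivAt t hrev

theorem IsIntegralCurve.clm_apply_eq_of_lipschitzWith {K : ℝ≥0} (hv : LipschitzWith K v)
    (L : E →L[ℝ] E) (hL : ∀ x, v (L x) = -L (v x)) (hγ : IsIntegralCurve γ (fun _ => v))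
    {s : ℝ} (hs : L (γ s) = γ s) (t : ℝ) : L (γ (2 * s - t)) = γ t := by
  have := ODE_solution_unique_univ (v := fun _ => v) (s := fun _ => univ) (t₀ := s)
    (fun _ => hv.lipschitzOnWith) (fun t => ⟨hγ.clm_comp_reverse L hL (2 * s) t, mem_univ _⟩)
    (fun t => ⟨hγ t, mem_univ _⟩) (by simpa [two_mul] using hs)
  exact congrFun this t

end Reversibility

theorem exists_isIntegralCurve_of_lipschitzWith_of_norm_le {E : Type*} [NormedAddCommGroup E]
    [NormedSpace ℝ E] [CompleteSpace E] {w : E → E} {K : ℝ≥0} (hw : LipschitzWith K w) {C : ℝ}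
    (hC : ∀ x, ‖w x‖ ≤ C) (x₀ : E) : ∃ γ, γ 0 = x₀ ∧ IsIntegralCurve γ (fun _ => w) := by
  have hC0 : 0 ≤ C := (norm_nonneg _).trans (hC x₀)
  have hlocal : ∀ n : ℕ, ∃ γ : ℝ → E, γ 0 = x₀ ∧
      ∀ t ∈ Ioo (-(n : ℝ)) n, HasDerivAt γ (w (γ t)) t := by
    intro n
    have hn : (0 : ℝ) ∈ Icc (-(n : ℝ)) n := ⟨by simp, n.cast_nonneg⟩
    have hPL : IsPicardLindelof (fun _ => w) ⟨0, hn⟩ x₀ ⟨C * n, by positivity⟩ 0 ⟨C, hC0⟩ K :=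
      IsPicardLindelof.of_time_independent (fun x _ => hC x) hw.lipschitzOnWith
        (by simp only [sub_zero, sub_neg_eq_add, zero_add, max_self, NNReal.coe_zero]; rfl)
    obtain ⟨γ, hγ0, hγ⟩ := IsPicardLindelof.exists_eq_forall_mem_Icc_hasDerivWithinAt₀ hPL
    exact ⟨γ, hγ0, fun t ht =>
      (hγ t (Ioo_subset_Icc_self ht)).hasDerivAt (Icc_mem_nhds ht.1 ht.2)⟩
  choose sol hsol0 hsol using hlocal
  have hmono : ∀ n m : ℕ, n ≤ m → EqOn (sol n) (sol m) (Ioo (-(n : ℝ)) n) := by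
    intro n m hnm t ht
    have hsub : Ioo (-(n : ℝ)) n ⊆ Ioo (-(m : ℝ)) m :=
      Ioo_subset_Ioo (by simpa using hnm) (by simpa using hnm)
    refine ODE_solution_unique_of_mem_Ioo (v := fun _ => w) (s := fun _ => univ)
      (fun _ _ => hw.lipschitzOnWith) ⟨by linarith [ht.1, ht.2], by linarith [ht.1, ht.2]⟩
      (fun s hs => ⟨hsol n s hs, mem_univ _⟩) (fun s hs => ⟨hsol m s (hsub hs), mem_univ _⟩)
      ((hsol0 n).trans (hsol0 m).symm) ht
  have hagree : ∀ n m : ℕ, ∀ t ∈ Ioo (-(n : ℝ)) n, t ∈ Ioo (-(m : ℝ)) m → sol n t = sol m t := by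
    intro n m t hn hm
    rcases le_total n m with h | h
    · exact hmono n m h hn
    · exact (hmono m n h hm).symm
  have hmem : ∀ t : ℝ, t ∈ Ioo (-((⌈|t|⌉₊ + 1 : ℕ) : ℝ)) (⌈|t|⌉₊ + 1 : ℕ) := fun t => by
    have := Nat.le_ceil |t|
    push_cast
    constructor <;> linarith [neg_abs_le t, le_abs_self t]
  refine ⟨fun t => sol (⌈|t|⌉₊ + 1) t, by simpa using hsol0 1, fun t => ?_⟩
  have heq : (fun s => sol (⌈|s|⌉₊ + 1) s) =ᶠ[𝓝 t] sol (⌈|t|⌉₊ + 1) :=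
    eventually_of_mem (isOpen_Ioo.mem_nhds (hmem t)) fun s hs => hagree _ _ s (hmem s) hs
  exact (hsol _ t (hmem t)).congr_of_eventuallyEq heq

def clampBox (R : ℝ) (p : ℝ × ℝ) : ℝ × ℝ := (max (-R) (min R p.1), max (-R) (min R p.2))

theorem lipschitzWith_clampBox (R : ℝ) : LipschitzWith 1 (clampBox R) := by
  have hclamp : LipschitzWith 1 fun a : ℝ => max (-R) (min R a) :=
    (LipschitzWith.id.const_min R).const_max (-R)
  have := (hclamp.comp LipschitzWith.prod_fst).prodMk (hclamp.comp LipschitzWith.prod_snd)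
  rw [max_self, mul_one] at this
  exact this

theorem norm_clampBox_le {R : ℝ} (hR : 0 ≤ R) (p : ℝ × ℝ) : ‖clampBox R p‖ ≤ R := by
  simp only [clampBox, Prod.norm_def, Real.norm_eq_abs]
  exact max_le (abs_le.mpr ⟨le_max_left _ _, max_le (by linarith) (min_le_left _ _)⟩)
    (abs_le.mpr ⟨le_max_left _ _, max_le (by linarith) (min_le_left _ _)⟩)

theorem clampBox_of_norm_le {R : ℝ} {p : ℝ × ℝ} (h : ‖p‖ ≤ R) : clampBox R p = p := by
  simp only [Prod.norm_def, Real.norm_eq_abs, max_le_iff, abs_le] at h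
  simp [clampBox, h]

theorem LocallyLipschitz.exists_lipschitzWith_comp_clampBox {v : ℝ × ℝ → ℝ × ℝ}
    (hv : LocallyLipschitz v) {R : ℝ} (hR : 0 ≤ R) : ∃ K, LipschitzWith K (v ∘ clampBox R) := by
  obtain ⟨K, hK⟩ := (hv.locallyLipschitzOn (s := Metric.closedBall 0 R))
    |>.exists_lipschitzOnWith_of_compact (isCompact_closedBall 0 R)
  exact ⟨K * 1, lipschitzOnWith_univ.mp (hK.comp (lipschitzWith_clampBox R).lipschitzOnWith
    (fun p _ => by simpa using norm_clampBox_le hR p))⟩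

theorem LocallyLipschitz.exists_isIntegralCurve_comp_clampBox {v : ℝ × ℝ → ℝ × ℝ}
    (hv : LocallyLipschitz v) {R : ℝ} (hR : 0 ≤ R) (q : ℝ × ℝ) :
    ∃ γ, γ 0 = q ∧ IsIntegralCurve γ (fun _ => v ∘ clampBox R) := by
  obtain ⟨K, hK⟩ := hv.exists_lipschitzWith_comp_clampBox hR
  obtain ⟨C, hC⟩ := (isCompact_closedBall (0 : ℝ × ℝ) R).exists_bound_of_continuousOn
    hv.continuous.continuousOn
  exact exists_isIntegralCurve_of_lipschitzWith_of_norm_le hK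
    (fun p => hC _ (by simpa using norm_clampBox_le hR p)) q

theorem max_neg_min_neg {R : ℝ} (hR : 0 ≤ R) (a : ℝ) :
    max (-R) (min R (-a)) = -max (-R) (min R a) := by
  simp only [min_def, max_def]
  split_ifs <;> linarith

theorem IsIntegralCurve.hasDerivAt_of_norm_le {v : ℝ × ℝ → ℝ × ℝ} {R : ℝ} {γ : ℝ → ℝ × ℝ}
    (hγ : IsIntegralCurve γ (fun _ => v ∘ clampBox R))
    {t : ℝ} (ht : ‖γ t‖ ≤ R) : HasDerivAt γ (v (γ t)) t := by
  simpa [clampBox_of_norm_le ht] using hγ t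

noncomputable section

namespace QuinticLienard

def field (c : ℝ) (p : ℝ × ℝ) : ℝ × ℝ := (p.2, -(p.1 ^ 3 + p.1 ^ 5) - c * p.1 * p.2)

theorem locallyLipschitz_field (c : ℝ) : LocallyLipschitz (field c) :=
  ContDiff.locallyLipschitz (show ContDiff ℝ 1 (field c) by unfold field; fun_prop)

theorem field_neg (c : ℝ) (p : ℝ × ℝ) : field c (-p) = -field (-c) p := by
  simp only [field, Prod.fst_neg, Prod.snd_neg, Prod.neg_mk]
  congr 1; ring

def reflectX : ℝ × ℝ →L[ℝ] ℝ × ℝ :=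
  (-ContinuousLinearMap.fst ℝ ℝ ℝ).prod (ContinuousLinearMap.snd ℝ ℝ ℝ)

def reflectY : ℝ × ℝ →L[ℝ] ℝ × ℝ :=
  (ContinuousLinearMap.fst ℝ ℝ ℝ).prod (-ContinuousLinearMap.snd ℝ ℝ ℝ)

@[simp] theorem reflectX_apply (p : ℝ × ℝ) : reflectX p = (-p.1, p.2) := rfl

@[simp] theorem reflectY_apply (p : ℝ × ℝ) : reflectY p = (p.1, -p.2) := rfl

@[simp] theorem norm_reflectX (p : ℝ × ℝ) : ‖reflectX p‖ = ‖p‖ := by simp [Prod.norm_def]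

@[simp] theorem norm_reflectY (p : ℝ × ℝ) : ‖reflectY p‖ = ‖p‖ := by simp [Prod.norm_def]

theorem field_clampBox_reflectX (c : ℝ) {R : ℝ} (hR : 0 ≤ R) (p : ℝ × ℝ) :
    field c (clampBox R (reflectX p)) = -reflectX (field c (clampBox R p)) := by
  simp only [field, clampBox, reflectX_apply, max_neg_min_neg hR, Prod.neg_mk]
  congr 1 <;> ring

theorem field_clampBox_reflectY (c : ℝ) {R : ℝ} (hR : 0 ≤ R) (p : ℝ × ℝ) :
    field c (clampBox R (reflectY p)) = -reflectY (field (-c) (clampBox R p)) := by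
  simp only [field, clampBox, reflectY_apply, max_neg_min_neg hR, Prod.neg_mk]
  congr 1; ring

def energy (p : ℝ × ℝ) : ℝ := p.2 ^ 2 / 2 + p.1 ^ 4 / 4 + p.1 ^ 6 / 6

theorem energy_nonneg (p : ℝ × ℝ) : 0 ≤ energy p := by unfold energy; positivity

theorem sq_snd_le_two_mul_energy (p : ℝ × ℝ) : p.2 ^ 2 ≤ 2 * energy p := by
  unfold energy; nlinarith [pow_two_nonneg (p.1 ^ 2), pow_two_nonneg (p.1 ^ 3)]

theorem energy_reflectY (p : ℝ × ℝ) : energy (reflectY p) = energy p := by simp [energy]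

theorem norm_le_of_energy_le {p : ℝ × ℝ} {M : ℝ} (h : energy p ≤ M) : ‖p‖ ≤ 4 * M + 1 := by
  unfold energy at h
  have hx4 : p.1 ^ 4 ≤ 4 * M := by nlinarith [pow_two_nonneg p.2, pow_two_nonneg (p.1 ^ 3)]
  have hy2 : p.2 ^ 2 ≤ 2 * M := by nlinarith [pow_two_nonneg (p.1 ^ 2), pow_two_nonneg (p.1 ^ 3)]
  rw [Prod.norm_def, Real.norm_eq_abs, Real.norm_eq_abs]
  refine max_le ?_ ?_
  · have h4 : p.1 ^ 4 = |p.1| ^ 4 := (pow_abs p.1 4 ▸ (abs_of_nonneg (by positivity)).symm)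
    nlinarith [sq_nonneg (|p.1| ^ 2 - 1 / 2), sq_nonneg (|p.1| - 1 / 2)]
  · nlinarith [sq_abs p.2, sq_nonneg (|p.2| - 1 / 2)]

theorem hasDerivAt_energy {c t : ℝ} {γ : ℝ → ℝ × ℝ} (hγ : HasDerivAt γ (field c (γ t)) t) :
    HasDerivAt (fun s => energy (γ s)) (-c * (γ t).1 * (γ t).2 ^ 2) t := by
  have hx := hγ.fst
  have hy := hγ.snd
  refine (((hy.pow 2).div_const 2).add ((hx.pow 4).div_const 4) |>.add
    ((hx.pow 6).div_const 6)).congr_deriv ?_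
  simp only [field]
  ring

def blowupSlope (p : ℝ × ℝ) : ℝ := -p.2 / p.1 ^ 2

def phase (p : ℝ × ℝ) : ℝ := arctan (blowupSlope p)

def phaseRate (c : ℝ) (p : ℝ × ℝ) : ℝ :=
  p.1 * (2 * blowupSlope p ^ 2 - c * blowupSlope p + 1 + p.1 ^ 2) / (1 + blowupSlope p ^ 2)

theorem abs_phase_lt (p : ℝ × ℝ) : |phase p| < π / 2 :=
  abs_lt.mpr ⟨neg_pi_div_two_lt_arctan _, arctan_lt_pi_div_two _⟩

theorem hasDerivAt_phase {c t : ℝ} {γ : ℝ → ℝ × ℝ} (hγ : HasDerivAt γ (field c (γ t)) t)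
    (hx : (γ t).1 ≠ 0) : HasDerivAt (fun s => phase (γ s)) (phaseRate c (γ t)) t := by
  have hu : HasDerivAt (fun s => blowupSlope (γ s))
      ((γ t).1 * (2 * blowupSlope (γ t) ^ 2 - c * blowupSlope (γ t) + 1 + (γ t).1 ^ 2)) t := by
    refine (hγ.snd.neg.div (hγ.fst.pow 2) (pow_ne_zero 2 hx)).congr_deriv ?_
    simp only [field, blowupSlope, Pi.pow_apply, Pi.neg_apply]
    field_simp
    ring
  refine ((hasDerivAt_arctan _).comp t hu).congr_deriv ?_
  simp only [phaseRate]
  ring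

def turnRate (c : ℝ) : ℝ := (8 - c ^ 2) / 12

theorem turnRate_pos {c : ℝ} (hc : c ^ 2 < 8) : 0 < turnRate c := by
  unfold turnRate; linarith

theorem turnRate_mul_le_phaseRate (c : ℝ) {p : ℝ × ℝ} (hx : 0 ≤ p.1) :
    turnRate c * p.1 ≤ phaseRate c p := by
  set u := blowupSlope p
  -- With `δ = turnRate c`, the discriminant of `(2 - δ) u² - c u + (1 - δ)` equals `-4 δ²`.
  have hquad : turnRate c * (1 + u ^ 2) ≤ 2 * u ^ 2 - c * u + 1 := by
    unfold turnRate
    nlinarith [sq_nonneg ((16 + c ^ 2) * u - 6 * c), sq_nonneg (c ^ 2 - 8)]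
  rw [phaseRate, le_div_iff₀ (by positivity)]
  nlinarith [mul_le_mul_of_nonneg_left hquad hx, mul_nonneg hx (sq_nonneg p.1)]

def energyExponent (c : ℝ) : ℝ := 2 * |c| / turnRate c

theorem energyExponent_nonneg {c : ℝ} (hc : c ^ 2 < 8) : 0 ≤ energyExponent c :=
  div_nonneg (by positivity) (turnRate_pos hc).le

theorem energyExponent_neg (c : ℝ) : energyExponent (-c) = energyExponent c := by
  simp [energyExponent, turnRate]

theorem two_mul_abs_mul_le_energyExponent_mul_phaseRate {c : ℝ} (hc : c ^ 2 < 8) {p : ℝ × ℝ}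
    (hx : 0 ≤ p.1) : 2 * |c| * p.1 ≤ energyExponent c * phaseRate c p := by
  calc 2 * |c| * p.1 = energyExponent c * (turnRate c * p.1) := by
        rw [energyExponent]; field_simp [(turnRate_pos hc).ne']
    _ ≤ energyExponent c * phaseRate c p :=
        mul_le_mul_of_nonneg_left (turnRate_mul_le_phaseRate c hx) (energyExponent_nonneg hc)

section RightHalfPlane

variable {c : ℝ} {γ : ℝ → ℝ × ℝ} {a b : ℝ}

theorem turnRate_mul_le_phase_sub (hc : c ^ 2 < 8) {ρ : ℝ} (hab : a ≤ b)
    (hγ : ∀ t ∈ Icc a b, HasDerivAt γ (field c (γ t)) t) (hx : ∀ t ∈ Icc a b, 0 < (γ t).1)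
    (hρ : ∀ t ∈ Icc a b, ρ ≤ (γ t).1) :
    turnRate c * ρ * (b - a) ≤ phase (γ b) - phase (γ a) := by
  have hmono : MonotoneOn (fun t => phase (γ t) - turnRate c * ρ * t) (Icc a b) := by
    refine monotoneOn_Icc_of_hasDerivAt_nonneg (fun t ht =>
      (hasDerivAt_phase (hγ t ht) (hx t ht).ne').sub ((hasDerivAt_id t).const_mul _))
      (fun t ht => ?_)
    have hturn := turnRate_mul_le_phaseRate c (hx t (Ioo_subset_Icc_self ht)).le
    have hδρ := mul_le_mul_of_nonneg_left (hρ t (Ioo_subset_Icc_self ht)) (turnRate_pos hc).le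
    simp only [mul_one]
    linarith
  have := hmono ⟨le_rfl, hab⟩ ⟨hab, le_rfl⟩ hab
  simp only at this
  linarith

theorem energy_le_mul_exp (hc : c ^ 2 < 8) (hab : a ≤ b)
    (hγ : ∀ t ∈ Icc a b, HasDerivAt γ (field c (γ t)) t) (hx : ∀ t ∈ Icc a b, 0 < (γ t).1) :
    energy (γ b) ≤ energy (γ a) * exp (energyExponent c * π) := by
  have hk := energyExponent_nonneg hc
  have hrate : ∀ t ∈ Ioo a b, -c * (γ t).1 * (γ t).2 ^ 2 ≤
      energyExponent c * energy (γ t) * phaseRate c (γ t) := by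
    intro t ht
    have hxt := (hx t (Ioo_subset_Icc_self ht)).le
    have hA := two_mul_abs_mul_le_energyExponent_mul_phaseRate hc hxt
    have hy := sq_snd_le_two_mul_energy (γ t)
    have hE := energy_nonneg (γ t)
    calc -c * (γ t).1 * (γ t).2 ^ 2 ≤ |c| * (γ t).1 * (2 * energy (γ t)) := by
          have := mul_nonneg hxt (sq_nonneg (γ t).2)
          nlinarith [neg_le_abs c, abs_nonneg c, mul_le_mul_of_nonneg_left hy hxt]
      _ = 2 * |c| * (γ t).1 * energy (γ t) := by ring
      _ ≤ energyExponent c * phaseRate c (γ t) * energy (γ t) :=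
          mul_le_mul_of_nonneg_right hA hE
      _ = _ := by ring
  calc energy (γ b)
      ≤ energy (γ a) * exp (energyExponent c * (phase (γ b) - phase (γ a))) :=
        le_mul_exp_of_deriv_le_mul hab (fun t ht => hasDerivAt_energy (hγ t ht))
          (fun t ht => hasDerivAt_phase (hγ t ht) (hx t ht).ne') hrate
    _ ≤ energy (γ a) * exp (energyExponent c * π) := by
        refine mul_le_mul_of_nonneg_left (exp_le_exp.mpr (mul_le_mul_of_nonneg_left ?_ hk))
          (energy_nonneg _)
        linarith [abs_lt.mp (abs_phase_lt (γ a)), abs_lt.mp (abs_phase_lt (γ b))]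

theorem energy_le_mul_exp_of_Ioo (hc : c ^ 2 < 8) (hab : a < b)
    (hγ : ∀ t ∈ Icc a b, HasDerivAt γ (field c (γ t)) t) (hx : ∀ t ∈ Ioo a b, 0 < (γ t).1) :
    energy (γ b) ≤ energy (γ a) * exp (energyExponent c * π) := by
  have hE : ∀ t ∈ Icc a b, ContinuousAt (fun s => energy (γ s)) t :=
    fun t ht => (hasDerivAt_energy (hγ t ht)).continuousAt
  have h0 : (0 : ℝ) ∈ closure (Ioo 0 ((b - a) / 2)) := by
    rw [closure_Ioo (by linarith)]
    exact left_mem_Icc.mpr (by linarith)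
  -- shrink `[a, b]` to `[a + ε, b - ε]`, where `x > 0`, and let `ε → 0`
  simpa using ContinuousWithinAt.closure_le (f := fun ε => energy (γ (b - ε)))
    (g := fun ε => energy (γ (a + ε)) * exp (energyExponent c * π)) h0
    ((hE b (right_mem_Icc.mpr hab.le)).comp_of_eq (by fun_prop) (sub_zero b)).continuousWithinAt
    (((hE a (left_mem_Icc.mpr hab.le)).comp_of_eq (by fun_prop) (add_zero a)).mul
      continuousAt_const).continuousWithinAt
    (fun ε hε => energy_le_mul_exp hc (by linarith [hε.2])
      (fun t ht => hγ t ⟨by linarith [ht.1, hε.1], by linarith [ht.2, hε.1]⟩)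
      (fun t ht => hx t ⟨by linarith [ht.1, hε.1], by linarith [ht.2, hε.1]⟩))

theorem sq_snd_mul_exp_le (hc : c ^ 2 < 8) (hab : a ≤ b)
    (hγ : ∀ t ∈ Icc a b, HasDerivAt γ (field c (γ t)) t) (hx : ∀ t ∈ Icc a b, 0 < (γ t).1)
    (hy : ∀ t ∈ Icc a b, (γ t).2 ≤ 0) :
    (γ a).2 ^ 2 * exp (-(energyExponent c * π)) ≤ (γ b).2 ^ 2 := by
  have hk := energyExponent_nonneg hc
  have hrate : ∀ t ∈ Ioo a b, -energyExponent c * (γ t).2 ^ 2 * phaseRate c (γ t) ≤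
      2 * (γ t).2 * (field c (γ t)).2 := by
    intro t ht
    have hxt := hx t (Ioo_subset_Icc_self ht)
    have hyt := hy t (Ioo_subset_Icc_self ht)
    have hA := two_mul_abs_mul_le_energyExponent_mul_phaseRate hc hxt.le
    have hg : 0 ≤ -(γ t).2 * ((γ t).1 ^ 3 + (γ t).1 ^ 5) := mul_nonneg (by linarith) (by positivity)
    have hcx : c * ((γ t).1 * (γ t).2 ^ 2) ≤ |c| * ((γ t).1 * (γ t).2 ^ 2) :=
      mul_le_mul_of_nonneg_right (le_abs_self c) (by positivity)
    simp only [field]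
    nlinarith [mul_le_mul_of_nonneg_right hA (sq_nonneg (γ t).2)]
  calc (γ a).2 ^ 2 * exp (-(energyExponent c * π))
      ≤ (γ a).2 ^ 2 * exp (-energyExponent c * (phase (γ b) - phase (γ a))) := by
        refine mul_le_mul_of_nonneg_left (exp_le_exp.mpr ?_) (sq_nonneg _)
        have : phase (γ b) - phase (γ a) ≤ π := by
          linarith [abs_lt.mp (abs_phase_lt (γ a)), abs_lt.mp (abs_phase_lt (γ b))]
        nlinarith
    _ ≤ (γ b).2 ^ 2 :=
        mul_exp_le_of_mul_le_deriv (F := fun t => (γ t).2 ^ 2) hab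
          (fun t ht => ((hγ t ht).snd.pow 2).congr_deriv (by ring))
          (fun t ht => hasDerivAt_phase (hγ t ht) (hx t ht).ne') hrate

theorem not_forall_fst_pos (hc : c ^ 2 < 8)
    (hγ : ∀ t ∈ Ioi 0, HasDerivAt γ (field c (γ t)) t) : ¬ ∀ t ∈ Ioi (0 : ℝ), 0 < (γ t).1 := by
  intro hx
  have hγI : ∀ {s t : ℝ}, 0 < s → ∀ r ∈ Icc s t, HasDerivAt γ (field c (γ r)) r :=
    fun hs r hr => hγ r (hs.trans_le hr.1)
  have hxI : ∀ {s t : ℝ}, 0 < s → ∀ r ∈ Icc s t, 0 < (γ r).1 :=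
    fun hs r hr => hx r (hs.trans_le hr.1)
  -- If `y ≥ 0` on `[1, ∞)`, then `x ≥ x(1)` there and the phase would grow without bound.
  obtain ⟨τ, hτ1, hyτ⟩ : ∃ τ, 1 ≤ τ ∧ (γ τ).2 < 0 := by
    by_contra! hy
    have hρ : 0 < (γ 1).1 := hx 1 (mem_Ioi.mpr one_pos)
    have hδρ : 0 < turnRate c * (γ 1).1 := mul_pos (turnRate_pos hc) hρ
    set N := 1 + π / (turnRate c * (γ 1).1)
    have hN : 1 ≤ N := le_add_of_nonneg_right (div_nonneg pi_pos.le hδρ.le)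
    have hxmono : MonotoneOn (fun t => (γ t).1) (Icc 1 N) :=
      monotoneOn_Icc_of_hasDerivAt_nonneg (fun t ht => (hγI one_pos t ht).fst)
        (fun t ht => hy t ht.1.le)
    have hgrow := turnRate_mul_le_phase_sub hc hN (hγI one_pos) (hxI one_pos)
      (fun t ht => hxmono (left_mem_Icc.mpr hN) ht ht.1)
    have hNπ : turnRate c * (γ 1).1 * (N - 1) = π := by
      rw [add_sub_cancel_left, mul_div_cancel₀ _ hδρ.ne']
    linarith [abs_lt.mp (abs_phase_lt (γ N)), abs_lt.mp (abs_phase_lt (γ 1))]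
  have hτ0 : 0 < τ := by linarith
  -- The phase is nondecreasing, so `-y / x² > 0` persists after `τ`.
  have hyneg : ∀ t, τ ≤ t → (γ t).2 < 0 := by
    intro t ht
    have hmono := turnRate_mul_le_phase_sub (ρ := 0) hc ht (hγI hτ0) (hxI hτ0)
      (fun r hr => (hxI hτ0 r hr).le)
    have hpτ : 0 < phase (γ τ) :=
      arctan_pos.mpr (div_pos (neg_pos.mpr hyτ) (pow_pos (hx τ hτ0) 2))
    simp only [mul_zero, zero_mul] at hmono
    have hpt : 0 < blowupSlope (γ t) := arctan_pos.mp (show 0 < phase (γ t) by linarith)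
    by_contra! h
    exact hpt.not_ge (div_nonpos_of_nonpos_of_nonneg (by linarith) (sq_nonneg _))
  set m := √((γ τ).2 ^ 2 * exp (-(energyExponent c * π)))
  have hm : 0 < m := Real.sqrt_pos.mpr (by have := hyτ.ne; positivity)
  have hym : ∀ t, τ ≤ t → (γ t).2 ≤ -m := by
    intro t ht
    have hsq := sq_snd_mul_exp_le hc ht (hγI hτ0) (hxI hτ0) (fun r hr => (hyneg r hr.1).le)
    have : m ≤ |(γ t).2| := by rw [← Real.sqrt_sq_eq_abs]; exact Real.sqrt_le_sqrt hsq
    rw [abs_of_neg (hyneg t ht)] at this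
    linarith
  -- Moving left at speed at least `m`, the orbit reaches `x = 0` by time `τ + x(τ) / m`.
  set t₁ := τ + (γ τ).1 / m
  have ht₁ : τ ≤ t₁ := le_add_of_nonneg_right (div_nonneg (hx τ hτ0).le hm.le)
  have hdecr : MonotoneOn (fun t => -(γ t).1 - m * t) (Icc τ t₁) :=
    monotoneOn_Icc_of_hasDerivAt_nonneg
      (fun t ht => (hγI hτ0 t ht).fst.neg.sub ((hasDerivAt_id t).const_mul m))
      (fun t ht => by simp only [field, mul_one]; linarith [hym t ht.1.le])
  have := hdecr (left_mem_Icc.mpr ht₁) (right_mem_Icc.mpr ht₁) ht₁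
  have hmt₁ : m * t₁ = m * τ + (γ τ).1 := by simp only [t₁]; field_simp
  simp only at this
  linarith [hx t₁ (mem_Ioi.mpr (by linarith))]

end RightHalfPlane

section Truncated

variable {c R : ℝ} {γ : ℝ → ℝ × ℝ}

theorem norm_lt_of_fst_pos (hc : c ^ 2 < 8)
    (hR : 4 * (energy (γ 0) * exp (energyExponent c * π)) + 1 < R)
    (hγ : IsIntegralCurve γ (fun _ => field c ∘ clampBox R)) {t : ℝ}
    (hx : ∀ s ∈ Ioo 0 t, 0 < (γ s).1) : ∀ s ∈ Icc 0 t, ‖γ s‖ < R := by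
  have hexp : 1 ≤ exp (energyExponent c * π) :=
    one_le_exp (mul_nonneg (energyExponent_nonneg hc) pi_pos.le)
  refine hγ.continuous.norm.continuousOn.forall_mem_Icc_lt_of_bootstrap ?_ fun τ hτ hball => ?_
  · refine (norm_le_of_energy_le (le_refl (energy (γ 0)))).trans_lt (lt_of_le_of_lt ?_ hR)
    nlinarith [energy_nonneg (γ 0)]
  · refine (norm_le_of_energy_le (energy_le_mul_exp_of_Ioo hc hτ.1
      (fun s hs => hγ.hasDerivAt_of_norm_le (hball s hs))
      (fun s hs => hx s ⟨hs.1, hs.2.trans_le hτ.2⟩))).trans_lt (by linarith)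

theorem exists_fst_eq_zero (hc : c ^ 2 < 8) (hγ0 : 0 < (γ 0).1 ∨ ((γ 0).1 = 0 ∧ 0 < (γ 0).2))
    (hR : 4 * (energy (γ 0) * exp (energyExponent c * π)) + 1 < R)
    (hγ : IsIntegralCurve γ (fun _ => field c ∘ clampBox R)) :
    ∃ T > 0, (γ T).1 = 0 ∧ (∀ t ∈ Ioo 0 T, 0 < (γ t).1) ∧ ∀ t ∈ Icc 0 T, ‖γ t‖ < R := by
  have hstart : ∀ᶠ s in 𝓝[>] (0 : ℝ), 0 < (γ s).1 := by
    rcases hγ0 with hpos | ⟨hzero, hy⟩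
    · exact nhdsWithin_le_nhds ((continuous_fst.comp hγ.continuous).continuousAt.eventually
        (eventually_gt_nhds hpos))
    · have hball := norm_lt_of_fst_pos hc hR hγ (t := 0) (by simp) 0 (left_mem_Icc.mpr le_rfl)
      exact (hγ.hasDerivAt_of_norm_le hball.le).fst.eventually_pos_nhdsGT hy hzero
  obtain ⟨t₁, ht₁, hxt₁⟩ : ∃ t₁ > 0, (γ t₁).1 ≤ 0 := by
    by_contra! hpos
    refine not_forall_fst_pos hc (fun t ht => hγ.hasDerivAt_of_norm_le ?_) hpos
    exact (norm_lt_of_fst_pos hc hR hγ (fun s hs => hpos s hs.1) t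
      (right_mem_Icc.mpr (le_of_lt ht))).le
  obtain ⟨T, hT, hxT, hpos⟩ :=
    (continuous_fst.comp hγ.continuous).exists_first_zero hstart ht₁ hxt₁
  exact ⟨T, hT.1, hxT, hpos, norm_lt_of_fst_pos hc hR hγ hpos⟩

end Truncated

theorem exists_periodic_of_rightHalf {c : ℝ} (hc : c ^ 2 < 8) {p : ℝ × ℝ}
    (hp : 0 < p.1 ∨ (p.1 = 0 ∧ 0 < p.2)) :
    ∃ P > 0, ∃ γ, IsIntegralCurve γ (fun _ => field c) ∧ γ 0 = p ∧ Function.Periodic γ P ∧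
      ∃ t, γ t ≠ p := by
  set R := 4 * (energy p * exp (energyExponent c * π)) + 2
  have hR0 : 0 ≤ R := by have := energy_nonneg p; positivity
  have hRp : 4 * (energy p * exp (energyExponent c * π)) + 1 < R := by linarith
  obtain ⟨K, hK⟩ := (locallyLipschitz_field c).exists_lipschitzWith_comp_clampBox hR0
  obtain ⟨γ, hγ0, hγ⟩ := (locallyLipschitz_field c).exists_isIntegralCurve_comp_clampBox hR0 p
  obtain ⟨T₁, hT₁, hxT₁, hxpos, hball₁⟩ :=
    exists_fst_eq_zero hc (hγ0 ▸ hp) (hγ0 ▸ hRp) hγ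
  obtain ⟨T₀, hT₀, hxT₀, hball₀⟩ :
      ∃ T₀ ≥ 0, (γ (-T₀)).1 = 0 ∧ ∀ t ∈ Icc (-T₀) 0, ‖γ t‖ < R := by
    rcases hp with hp1 | ⟨hp1, -⟩
    · -- the backward passage through `x > 0` is a forward one for the system with `-c`
      have hσ : IsIntegralCurve (fun t => reflectY (γ (0 - t)))
          (fun _ => field (-c) ∘ clampBox R) :=
        hγ.clm_comp_reverse reflectY (fun q => by simpa using field_clampBox_reflectY (-c) hR0 q) 0
      obtain ⟨T₀, hT₀, hx0, -, hball⟩ := exists_fst_eq_zero (by rwa [neg_sq])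
        (by simpa [hγ0] using Or.inl hp1)
        (by simpa only [sub_zero, hγ0, energy_reflectY, energyExponent_neg] using hRp) hσ
      refine ⟨T₀, hT₀.le, by simpa using hx0, fun t ht => ?_⟩
      simpa only [sub_neg_eq_add, zero_add, norm_reflectY] using
        hball (-t) ⟨by linarith [ht.2], by linarith [ht.1]⟩
    · refine ⟨0, le_rfl, by simpa [hγ0] using hp1, fun t ht => ?_⟩
      obtain rfl : t = 0 := by linarith [ht.1, ht.2]
      exact hball₁ 0 (left_mem_Icc.mpr hT₁.le)
  have hball : ∀ t ∈ Icc (-T₀) T₁, ‖γ t‖ < R := fun t ht =>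
    (le_total t 0).elim (fun h => hball₀ t ⟨ht.1, h⟩) (fun h => hball₁ t ⟨h, ht.2⟩)
  have hrefl : ∀ s, (γ s).1 = 0 → ∀ t, reflectX (γ (2 * s - t)) = γ t := fun s hs =>
    hγ.clm_apply_eq_of_lipschitzWith hK reflectX (field_clampBox_reflectX c hR0)
      (by ext <;> simp [hs])
  have hper : Function.Periodic γ (2 * (T₁ + T₀)) := fun t => by
    rw [← hrefl T₁ hxT₁, ← hrefl (-T₀) hxT₀ t]
    ring_nf
  have hnorm : ∀ t, ‖γ t‖ < R := by
    intro t
    obtain ⟨s, hs, hγs⟩ := hper.exists_mem_Ico (by positivity) t (-T₀)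
    rw [hγs]
    rcases le_or_gt s T₁ with h | h
    · exact hball s ⟨hs.1, h⟩
    · rw [← hrefl T₁ hxT₁ s, norm_reflectX]
      exact hball _ ⟨by linarith [hs.2], by linarith⟩
  refine ⟨2 * (T₁ + T₀), by positivity, γ, fun t => hγ.hasDerivAt_of_norm_le (hnorm t).le, hγ0,
    hper, 3 * T₁ / 2, fun h => ?_⟩
  have hmirror := congrArg Prod.fst (hrefl T₁ hxT₁ (T₁ / 2))
  rw [show 2 * T₁ - T₁ / 2 = 3 * T₁ / 2 by ring, h, reflectX_apply] at hmirror
  have := hxpos (T₁ / 2) ⟨by linarith, by linarith⟩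
  rcases hp with hp | ⟨hp, -⟩ <;> simp only at hmirror <;> linarith

theorem exists_periodic_isIntegralCurve {c : ℝ} (hc : c ^ 2 < 8) {q : ℝ × ℝ} (hq : q ≠ 0) :
    ∃ P > 0, ∃ γ, IsIntegralCurve γ (fun _ => field c) ∧ γ 0 = q ∧ Function.Periodic γ P ∧
      ∃ t, γ t ≠ q := by
  by_cases hright : 0 < q.1 ∨ (q.1 = 0 ∧ 0 < q.2)
  · exact exists_periodic_of_rightHalf hc hright
  have hleft : 0 < (-q).1 ∨ ((-q).1 = 0 ∧ 0 < (-q).2) := by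
    rcases lt_trichotomy q.1 0 with h | h | h
    · simp [h]
    · have hq2 : q.2 ≠ 0 := fun h2 => hq (Prod.ext h h2)
      have hq2' : q.2 ≤ 0 := not_lt.mp fun h2 => hright (Or.inr ⟨h, h2⟩)
      simpa [h] using lt_of_le_of_ne hq2' hq2
    · exact absurd (Or.inl h) hright
  obtain ⟨P, hP, γ, hγ, hγ0, hper, t, ht⟩ :=
    exists_periodic_of_rightHalf (c := -c) (by rwa [neg_sq]) hleft
  refine ⟨P, hP, -γ, fun s => ?_, by simp [hγ0], fun s => by simp [hper s], t,
    fun h => ht (by simp [← h])⟩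
  simpa [field_neg] using (hγ s).neg

end QuinticLienard

end

theorem quintic_lienard_nilpotent_type_global_center_general
    (c : ℝ) (hc : |c| < 2 * Real.sqrt 2)
    (g f : ℝ → ℝ)
    (hg : ∀ x : ℝ, g x = x ^ 3 + x ^ 5)
    (hf : ∀ x : ℝ, f x = c * x) :
    IsGlobalCenter g f ∧ f 0 = 0 ∧ deriv g 0 = 0 := by
  have hc8 : c ^ 2 < 8 := by
    have h8 : (2 * √2) ^ 2 = 8 := by rw [mul_pow, sq_sqrt (by norm_num)]; norm_num
    rw [← sq_abs, ← h8]
    exact pow_lt_pow_left₀ hc (abs_nonneg c) two_ne_zero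
  refine ⟨⟨by simp [hg], fun p hp => ?_⟩, by simp [hf], ?_⟩
  · obtain ⟨P, hP, γ, hγ, hγ0, hper, t, ht⟩ :=
      QuinticLienard.exists_periodic_isIntegralCurve hc8 hp
    refine ⟨P, hP, γ, fun s => ⟨(hγ s).fst, ?_⟩, hγ0, hper, fun h => ht (h t)⟩
    simpa [hg, hf, QuinticLienard.field, mul_assoc] using (hγ s).snd
  · rw [show g = fun x => x ^ 3 + x ^ 5 from funext hg]
    simp

theorem quintic_lienard_nilpotent_type_global_center
    (c : ℝ) (hc0 : 0 < |c|) (hc : |c| < 2 * Real.sqrt 2)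
    (g f : ℝ → ℝ)
    (hg : ∀ x : ℝ, g x = x ^ 3 + x ^ 5)
    (hf : ∀ x : ℝ, f x = c * x) :
    IsGlobalCenter g f ∧ f 0 = 0 ∧ deriv g 0 = 0 :=
  quintic_lienard_nilpotent_type_global_center_general c hc g f hg hf
end

section
/- Assume conditions (i) and (iii) hold for the generalized polynomial Liénard system (1), and assume condition (iv) fails. Then there exists K ≥ 0 such that either F(x₁) < F(x₂) for all x₁ < 0 < x₂ with G(x₁) = G(x₂) > K, or F(x₁) > F(x₂) for all x₁ < 0 < x₂ with G(x₁) = G(x₂) > K. -/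
/-!
By (i), `G` is strictly decreasing on `(-∞, 0]` and strictly increasing on `[0, ∞)`, so each
`x > 0` has at most one conjugate `φ x < 0` with `G (φ x) = G x`, and then
`F x₁ - F x₂ = -Ψ x₂` for `Ψ x = F x - F (φ x)`; condition (iv) says `Ψ = 0` on `(0, ∞)`.

Write `x = 1/u` and `φ x = -y/u`. Multiplied by `u ^ (m + 1)`, the equation `G (φ x) = G x`
becomes a polynomial equation in `(u, y)` whose restriction to `u = 0` is
`a m / (m + 1) * (y ^ (m + 1) - 1) = 0`; since `m` is odd and `a m ≠ 0` by (iii), the analytic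
implicit function theorem gives an analytic branch `y(u)` with `y(0) = 1`. This produces
conjugates of all large `x`, hence (intermediate value theorem) of all `x > 0`, and shows that
`u ^ (n + 1) * Ψ (1/u)` extends analytically to `u = 0`. The implicit function theorem at finite
points makes `φ`, hence `Ψ`, analytic on `(0, ∞)`.

An analytic function of `u` either vanishes near `0` or has no zeros in a punctured neighbourhood
of `0`. In the first case `Ψ` vanishes near `∞`, hence on all of `(0, ∞)` by the identity
theorem, so (iv) holds. In the second, `Ψ` has no zeros near `∞` and therefore a constant sign
there; as `G` is increasing on `[0, ∞)`, "`x₂` large" can be expressed as "`G x₂ > K`".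
-/

open Filter Topology Finset Set
open scoped ContDiff

theorem AnalyticAt.exists_implicitFunction {𝕜 E : Type*} [RCLike 𝕜] [NormedAddCommGroup E]
    [NormedSpace 𝕜 E] [CompleteSpace E] {Φ : E × 𝕜 → 𝕜} {u : E × 𝕜} {c : 𝕜}
    (hΦ : AnalyticAt 𝕜 Φ u) (hd : HasDerivAt (fun z => Φ (u.1, z)) c u.2) (hc : c ≠ 0) :
    ∃ ψ : E → 𝕜, AnalyticAt 𝕜 ψ u.1 ∧ ψ u.1 = u.2 ∧ ∀ᶠ x in 𝓝 u.1, Φ (x, ψ x) = Φ u := by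
  have hΦ' : ContDiffAt 𝕜 ω Φ u := hΦ.contDiffAt
  have hinv : (fderiv 𝕜 Φ u ∘L .inr 𝕜 E 𝕜).IsInvertible := by
    refine ⟨.unitsEquivAut 𝕜 (.mk0 c hc), ?_⟩
    have hpartial : fderiv 𝕜 Φ u (0, 1) = c :=
      (hΦ.differentiableAt.hasFDerivAt.comp_hasDerivAt u.2
        ((hasDerivAt_const u.2 u.1).prodMk (hasDerivAt_id u.2))).unique hd
    ext
    simpa using hpartial.symm
  exact ⟨_, (hΦ'.contDiffAt_implicitFunction (by simp) hinv).analyticAt,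
    hΦ'.implicitFunction_apply_self _ hinv, hΦ'.eventually_apply_implicitFunction _ hinv⟩

theorem analyticAt_of_eventually_comp_eq {𝕜 E : Type*} [RCLike 𝕜] [NormedAddCommGroup E]
    [NormedSpace 𝕜 E] [CompleteSpace E] {G : 𝕜 → 𝕜} {H φ : E → 𝕜} {s : Set 𝕜} {x₀ : E}
    (hs : IsOpen s) (hinj : InjOn G s) (hG : AnalyticAt 𝕜 G (φ x₀)) (hG' : deriv G (φ x₀) ≠ 0)
    (hH : AnalyticAt 𝕜 H x₀) (hφ : ∀ᶠ x in 𝓝 x₀, φ x ∈ s ∧ G (φ x) = H x) :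
    AnalyticAt 𝕜 φ x₀ := by
  set Φ : E × 𝕜 → 𝕜 := fun q => G q.2 - H q.1
  have hΦ : AnalyticAt 𝕜 Φ (x₀, φ x₀) :=
    (hG.comp (x := (x₀, φ x₀)) analyticAt_snd).sub (hH.comp (x := (x₀, φ x₀)) analyticAt_fst)
  have hd : HasDerivAt (fun z => Φ (x₀, z)) (deriv G (φ x₀)) (φ x₀) :=
    hG.differentiableAt.hasDerivAt.sub_const (H x₀)
  obtain ⟨hφs₀, hφH₀⟩ := hφ.self_of_nhds
  obtain ⟨ψ, hψ, hψx₀, hψΦ⟩ := hΦ.exists_implicitFunction hd hG'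
  have hψs : ∀ᶠ x in 𝓝 x₀, ψ x ∈ s :=
    hψ.continuousAt.preimage_mem_nhds (hs.mem_nhds (hψx₀ ▸ hφs₀))
  refine hψ.congr ?_
  filter_upwards [hφ, hψs, hψΦ] with x ⟨hφs, hφH⟩ hψsx hΦx
  refine hinj hψsx hφs ?_
  simp only [Φ, hφH₀, sub_self, sub_eq_zero] at hΦx
  rw [hΦx, hφH]

theorem integral_sum_mul_pow (lo hi : ℕ) (c : ℕ → ℝ) (x : ℝ) :
    ∫ t in (0 : ℝ)..x, ∑ i ∈ Icc lo hi, c i * t ^ i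
      = ∑ i ∈ Icc lo hi, c i / (i + 1) * x ^ (i + 1) := by
  rw [intervalIntegral.integral_finsetSum fun i _ =>
    (by fun_prop : Continuous _).intervalIntegrable _ _]
  refine sum_congr rfl fun i _ => ?_
  rw [intervalIntegral.integral_const_mul, integral_pow]
  ring

theorem pow_mul_sum_mul_div_pow (lo hi : ℕ) (c : ℕ → ℝ) {u : ℝ} (hu : u ≠ 0) (z : ℝ) :
    u ^ (hi + 1) * ∑ i ∈ Icc lo hi, c i * (z / u) ^ (i + 1)
      = ∑ i ∈ Icc lo hi, c i * z ^ (i + 1) * u ^ (hi - i) := by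
  rw [mul_sum]
  refine sum_congr rfl fun i hi' => ?_
  have hsplit : u ^ (hi + 1) = u ^ (i + 1) * u ^ (hi - i) := by
    rw [← pow_add]; congr 1; have := (mem_Icc.1 hi').2; omega
  rw [hsplit, div_pow]
  field_simp

theorem sum_mul_zero_pow_sub {lo hi : ℕ} (h : lo ≤ hi) (d : ℕ → ℝ) :
    ∑ i ∈ Icc lo hi, d i * (0 : ℝ) ^ (hi - i) = d hi := by
  rw [sum_eq_single_of_mem hi (mem_Icc.2 ⟨h, le_rfl⟩)]
  · simp
  · intro i hi' hne
    have : i < hi := lt_of_le_of_ne (mem_Icc.1 hi').2 hne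
    simp [zero_pow (Nat.sub_ne_zero_of_lt this)]

section SumPowSucc

variable {P : ℝ → ℝ} {lo hi : ℕ} {c : ℕ → ℝ}

theorem exists_analyticAt_eq_pow_mul_comp_div
    (hP : ∀ x, P x = ∑ i ∈ Icc lo hi, c i * x ^ (i + 1)) {z : ℝ → ℝ} (hz : AnalyticAt ℝ z 0) :
    ∃ H : ℝ → ℝ, AnalyticAt ℝ H 0 ∧ ∀ u ≠ 0, H u = u ^ (hi + 1) * P (z u / u) :=
  ⟨fun u => ∑ i ∈ Icc lo hi, c i * z u ^ (i + 1) * u ^ (hi - i), by fun_prop,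
    fun u hu => by rw [hP, pow_mul_sum_mul_div_pow _ _ _ hu]⟩

theorem exists_analyticAt_eventually_comp_neg_div_eq
    (hP : ∀ x, P x = ∑ i ∈ Icc lo hi, c i * x ^ (i + 1)) (hlohi : lo ≤ hi) (hodd : Odd hi)
    (hc : c hi ≠ 0) :
    ∃ y : ℝ → ℝ, AnalyticAt ℝ y 0 ∧ y 0 = 1 ∧ ∀ᶠ u in 𝓝[≠] 0, P (-y u / u) = P u⁻¹ := by
  -- `Φ (u, z) = u ^ (hi + 1) * (P (-z / u) - P (1 / u))` for `u ≠ 0`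
  set Φ : ℝ × ℝ → ℝ := fun q => ∑ i ∈ Icc lo hi, c i * ((-q.2) ^ (i + 1) - 1) * q.1 ^ (hi - i)
  have hΦ : AnalyticAt ℝ Φ (0, 1) := by
    have h1 : AnalyticAt ℝ (fun q : ℝ × ℝ => q.1) (0, 1) := analyticAt_fst
    have h2 : AnalyticAt ℝ (fun q : ℝ × ℝ => q.2) (0, 1) := analyticAt_snd
    fun_prop
  have hΦ0 : ∀ z, Φ (0, z) = c hi * ((-z) ^ (hi + 1) - 1) := fun z => sum_mul_zero_pow_sub hlohi _
  have hΦ01 : Φ (0, 1) = 0 := by simp [hΦ0, hodd.add_one.neg_one_pow]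
  have hd : HasDerivAt (fun z => Φ (0, z)) (c hi * (hi + 1)) 1 := by
    simp_rw [hΦ0]
    refine ((((hasDerivAt_neg (1 : ℝ)).pow (hi + 1)).sub_const 1).const_mul (c hi)).congr_deriv ?_
    simp [hodd.neg_one_pow]
  obtain ⟨y, hy, hy1, hyΦ⟩ := hΦ.exists_implicitFunction hd (by positivity)
  refine ⟨y, hy, hy1, ?_⟩
  filter_upwards [hyΦ.filter_mono nhdsWithin_le_nhds, self_mem_nhdsWithin] with u hu hu0
  apply mul_left_cancel₀ (pow_ne_zero (hi + 1) (mem_compl_singleton_iff.1 hu0))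
  rw [hP, hP, ← one_div, pow_mul_sum_mul_div_pow _ _ _ hu0, pow_mul_sum_mul_div_pow _ _ _ hu0,
    ← sub_eq_zero, ← sum_sub_distrib]
  rw [hΦ01] at hu
  simpa [Φ, mul_sub, sub_mul] using hu

end SumPowSucc

theorem strictMonoOn_Ici_and_strictAntiOn_Iic_of_mul_pos {G g : ℝ → ℝ}
    (hG : ∀ x, HasDerivAt G (g x) x) (hg : ∀ x, x ≠ 0 → 0 < x * g x) :
    StrictMonoOn G (Ici 0) ∧ StrictAntiOn G (Iic 0) := by
  have hc : Continuous G := continuous_iff_continuousAt.2 fun x => (hG x).continuousAt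
  refine ⟨strictMonoOn_of_hasDerivWithinAt_pos (convex_Ici 0) hc.continuousOn
    (fun x _ => (hG x).hasDerivWithinAt) fun x hx => ?_,
    strictAntiOn_of_hasDerivWithinAt_neg (convex_Iic 0) hc.continuousOn
    (fun x _ => (hG x).hasDerivWithinAt) fun x hx => ?_⟩
  · rw [interior_Ici] at hx
    exact pos_of_mul_pos_right (hg x (ne_of_gt hx)) hx.le
  · rw [interior_Iic] at hx
    exact neg_of_mul_pos_right (hg x (ne_of_lt hx)) hx.le

section Conjugate

variable {G : ℝ → ℝ}

theorem exists_neg_eq_of_eventually_atTop (hc : Continuous G)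
    (hmono : StrictMonoOn G (Ici 0)) (hinf : ∀ᶠ x in atTop, ∃ z < 0, G z = G x) {x : ℝ}
    (hx : 0 < x) : ∃ z < 0, G z = G x := by
  obtain ⟨X, hxX, z, hz, hzX⟩ := ((eventually_ge_atTop x).and hinf).exists
  have hGx : G 0 < G x := hmono (mem_Ici.2 le_rfl) hx.le hx
  have hGxz : G x ≤ G z := hzX ▸ hmono.monotoneOn hx.le (hx.le.trans hxX) hxX
  obtain ⟨w, hw, hwx⟩ := intermediate_value_Icc' hz.le hc.continuousOn ⟨hGx.le, hGxz⟩
  refine ⟨w, lt_of_le_of_ne hw.2 ?_, hwx⟩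
  rintro rfl
  exact hGx.ne hwx

theorem exists_analyticOnNhd_conjugate (hG : ∀ x, AnalyticAt ℝ G x)
    (hmono : StrictMonoOn G (Ici 0)) (hanti : StrictAntiOn G (Iic 0))
    (hG' : ∀ z < 0, deriv G z ≠ 0) (hinf : ∀ᶠ x in atTop, ∃ z < 0, G z = G x) :
    ∃ φ : ℝ → ℝ, (∀ x, 0 < x → φ x < 0 ∧ G (φ x) = G x) ∧ AnalyticOnNhd ℝ φ (Ioi 0) := by
  have hc : Continuous G := continuous_iff_continuousAt.2 fun x => (hG x).continuousAt
  choose! φ hφneg hφG using fun x (hx : 0 < x) =>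
    exists_neg_eq_of_eventually_atTop hc hmono hinf hx
  refine ⟨φ, fun x hx => ⟨hφneg x hx, hφG x hx⟩, fun x₀ hx₀ => ?_⟩
  refine analyticAt_of_eventually_comp_eq isOpen_Iio (hanti.injOn.mono Iio_subset_Iic_self)
    (hG _) (hG' _ (hφneg x₀ hx₀)) (hG x₀) ?_
  filter_upwards [Ioi_mem_nhds hx₀] with x hx using ⟨hφneg x hx, hφG x hx⟩

end Conjugate

theorem eventually_eq_zero_or_eventually_ne_zero_atTop {Ψ H : ℝ → ℝ} {k : ℕ}
    (hH : AnalyticAt ℝ H 0) (hHΨ : ∀ᶠ u in 𝓝[>] 0, H u = u ^ k * Ψ u⁻¹) :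
    (∀ᶠ x in atTop, Ψ x = 0) ∨ ∀ᶠ x in atTop, Ψ x ≠ 0 := by
  have hzero : ∀ᶠ u in 𝓝[>] (0 : ℝ), H u = 0 ↔ Ψ u⁻¹ = 0 := by
    filter_upwards [hHΨ, self_mem_nhdsWithin] with u hu (hu0 : 0 < u)
    simp [hu, hu0.ne']
  have hinv := tendsto_inv_atTop_nhdsGT_zero (𝕜 := ℝ)
  refine hH.eventually_eq_zero_or_eventually_ne_zero.imp (fun h => ?_) fun h => ?_
  · filter_upwards [hinv.eventually ((h.filter_mono nhdsWithin_le_nhds).and hzero)] with x hx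
    simpa using hx.2.1 hx.1
  · filter_upwards [hinv.eventually ((h.filter_mono (nhdsGT_le_nhdsNE 0)).and hzero)] with x hx
    simpa using mt hx.2.2 hx.1

theorem AnalyticOnNhd.eqOn_zero_of_eventually_atTop {E : Type*} [NormedAddCommGroup E]
    [NormedSpace ℝ E] {f : ℝ → E} {a : ℝ} (hf : AnalyticOnNhd ℝ f (Ioi a))
    (h : ∀ᶠ x in atTop, f x = 0) : EqOn f 0 (Ioi a) := by
  obtain ⟨M, hM⟩ := eventually_atTop.1 h
  refine hf.eqOn_zero_of_preconnected_of_eventuallyEq_zero isPreconnected_Ioi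
    (z₀ := max M a + 1) ((le_max_right M a).trans_lt (lt_add_one _)) ?_
  filter_upwards [Ioi_mem_nhds (lt_add_one (max M a))] with x hx
  exact hM x (le_of_max_le_left hx.le)

theorem ContinuousOn.eventually_pos_or_eventually_neg_atTop {f : ℝ → ℝ} {a : ℝ}
    (hf : ContinuousOn f (Ioi a)) (h : ∀ᶠ x in atTop, f x ≠ 0) :
    (∀ᶠ x in atTop, 0 < f x) ∨ ∀ᶠ x in atTop, f x < 0 := by
  obtain ⟨M, hM⟩ := eventually_atTop.1 (h.and (eventually_gt_atTop a))
  have hconn : IsPreconnected (f '' Ici M) :=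
    isPreconnected_Ici.image f (hf.mono fun x hx => (hM M le_rfl).2.trans_le hx)
  have hcover : f '' Ici M ⊆ Ioi 0 ∪ Iio 0 := by
    rintro _ ⟨x, hx, rfl⟩
    exact (hM x hx).1.lt_or_gt.symm
  refine (hconn.subset_or_subset isOpen_Ioi isOpen_Iio Ioi_disjoint_Iio_same hcover).imp
    (fun hpos => ?_) fun hneg => ?_
  · exact eventually_atTop.2 ⟨M, fun x hx => hpos (mem_image_of_mem f hx)⟩
  · exact eventually_atTop.2 ⟨M, fun x hx => hneg (mem_image_of_mem f hx)⟩

theorem exists_nonneg_forall_lt_imp_of_eventually_atTop {G : ℝ → ℝ} (hG0 : G 0 = 0)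
    (hmono : StrictMonoOn G (Ici 0)) {p : ℝ → Prop} (h : ∀ᶠ x in atTop, p x) :
    ∃ K, 0 ≤ K ∧ ∀ x, 0 < x → K < G x → p x := by
  obtain ⟨M, hM⟩ := eventually_atTop.1 h
  have hM' : max M 0 ∈ Ici (0 : ℝ) := le_max_right M 0
  refine ⟨G (max M 0), ?_, fun x hx hK => ?_⟩
  · exact hG0.symm.le.trans (hmono.monotoneOn (mem_Ici.2 le_rfl) hM' hM')
  · exact hM x (le_of_max_le_left ((hmono.lt_iff_lt hM' (mem_Ici.2 hx.le)).1 hK).le)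

theorem exists_eventual_sign_of_conjugate {F G φ H : ℝ → ℝ} {k : ℕ} (hG0 : G 0 = 0)
    (hmono : StrictMonoOn G (Ici 0)) (hanti : StrictAntiOn G (Iic 0))
    (hφ : ∀ x, 0 < x → φ x < 0 ∧ G (φ x) = G x)
    (hΨ : AnalyticOnNhd ℝ (fun x => F x - F (φ x)) (Ioi 0)) (hH : AnalyticAt ℝ H 0)
    (hHΨ : ∀ᶠ u in 𝓝[>] 0, H u = u ^ k * (F u⁻¹ - F (φ u⁻¹)))
    (hiv : ¬ ∀ x₁ x₂ : ℝ, x₁ < 0 → 0 < x₂ → G x₁ = G x₂ → F x₁ = F x₂) :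
    ∃ K : ℝ, 0 ≤ K ∧
      ((∀ x₁ x₂ : ℝ, x₁ < 0 → 0 < x₂ → G x₁ = G x₂ → G x₂ > K → F x₁ < F x₂) ∨
       (∀ x₁ x₂ : ℝ, x₁ < 0 → 0 < x₂ → G x₁ = G x₂ → G x₂ > K → F x₁ > F x₂)) := by
  have hconj : ∀ x₁ x₂, x₁ < 0 → 0 < x₂ → G x₁ = G x₂ → x₁ = φ x₂ := fun x₁ x₂ h₁ h₂ hG =>
    hanti.injOn h₁.le (hφ x₂ h₂).1.le (hG.trans (hφ x₂ h₂).2.symm)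
  rcases eventually_eq_zero_or_eventually_ne_zero_atTop (Ψ := fun x => F x - F (φ x)) hH hHΨ
    with hzero | hne
  · refine absurd (fun x₁ x₂ h₁ h₂ hG => ?_) hiv
    rw [hconj x₁ x₂ h₁ h₂ hG]
    exact (sub_eq_zero.1 (hΨ.eqOn_zero_of_eventually_atTop hzero h₂)).symm
  rcases hΨ.continuousOn.eventually_pos_or_eventually_neg_atTop hne with hpos | hneg
  · obtain ⟨K, hK, hKΨ⟩ := exists_nonneg_forall_lt_imp_of_eventually_atTop hG0 hmono hpos
    refine ⟨K, hK, Or.inl fun x₁ x₂ h₁ h₂ hG hK₂ => ?_⟩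
    rw [hconj x₁ x₂ h₁ h₂ hG]
    exact sub_pos.1 (hKΨ x₂ h₂ hK₂)
  · obtain ⟨K, hK, hKΨ⟩ := exists_nonneg_forall_lt_imp_of_eventually_atTop hG0 hmono hneg
    refine ⟨K, hK, Or.inr fun x₁ x₂ h₁ h₂ hG hK₂ => ?_⟩
    rw [hconj x₁ x₂ h₁ h₂ hG]
    exact sub_neg.1 (hKΨ x₂ h₂ hK₂)

theorem exists_analytic_conjugate_of_polynomial {F G : ℝ → ℝ} {r m s n : ℕ} {a b : ℕ → ℝ}
    (hG : ∀ x, G x = ∑ i ∈ Icc r m, a i * x ^ (i + 1))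
    (hF : ∀ x, F x = ∑ i ∈ Icc s n, b i * x ^ (i + 1))
    (hrm : r ≤ m) (hm : Odd m) (ham : a m ≠ 0)
    (hmono : StrictMonoOn G (Ici 0)) (hanti : StrictAntiOn G (Iic 0))
    (hG' : ∀ z < 0, deriv G z ≠ 0) :
    ∃ φ H : ℝ → ℝ, (∀ x, 0 < x → φ x < 0 ∧ G (φ x) = G x) ∧
      AnalyticOnNhd ℝ (fun x => F x - F (φ x)) (Ioi 0) ∧ AnalyticAt ℝ H 0 ∧
      ∀ᶠ u in 𝓝[>] 0, H u = u ^ (n + 1) * (F u⁻¹ - F (φ u⁻¹)) := by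
  have hGa : ∀ x, AnalyticAt ℝ G x := fun x => by rw [funext hG]; fun_prop
  have hFa : ∀ x, AnalyticAt ℝ F x := fun x => by rw [funext hF]; fun_prop
  obtain ⟨y, hy, hy0, hyG⟩ := exists_analyticAt_eventually_comp_neg_div_eq hG hrm hm ham
  have hyinf : ∀ᶠ u in 𝓝[>] 0, -y u / u < 0 ∧ G (-y u / u) = G u⁻¹ := by
    have hypos : ∀ᶠ u in 𝓝 0, 0 < y u :=
      hy.continuousAt.tendsto.eventually_const_lt (by rw [hy0]; exact zero_lt_one)
    filter_upwards [hypos.filter_mono nhdsWithin_le_nhds, hyG.filter_mono (nhdsGT_le_nhdsNE 0),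
      self_mem_nhdsWithin] with u hyu hGu (hu : 0 < u)
    exact ⟨div_neg_of_neg_of_pos (neg_neg_of_pos hyu) hu, hGu⟩
  obtain ⟨φ, hφ, hφa⟩ := exists_analyticOnNhd_conjugate hGa hmono hanti hG' (by
    filter_upwards [tendsto_inv_atTop_nhdsGT_zero.eventually hyinf] with x hx
    exact ⟨_, hx.1, by rw [hx.2, inv_inv]⟩)
  have hφy : ∀ᶠ u in 𝓝[>] 0, φ u⁻¹ = -y u / u := by
    filter_upwards [hyinf, self_mem_nhdsWithin] with u hu (hu0 : 0 < u)
    have hφu := hφ u⁻¹ (inv_pos.2 hu0)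
    exact hanti.injOn hφu.1.le hu.1.le (hφu.2.trans hu.2.symm)
  obtain ⟨H₁, hH₁, hH₁F⟩ :=
    exists_analyticAt_eq_pow_mul_comp_div hF (z := fun _ => 1) analyticAt_const
  obtain ⟨H₂, hH₂, hH₂F⟩ := exists_analyticAt_eq_pow_mul_comp_div hF hy.neg
  refine ⟨φ, H₁ - H₂, hφ, fun x hx => (hFa x).sub ((hFa _).comp (hφa x hx)), hH₁.sub hH₂, ?_⟩
  filter_upwards [hφy, self_mem_nhdsWithin] with u hu (hu0 : 0 < u)
  simp [hH₁F u hu0.ne', hH₂F u hu0.ne', hu, mul_sub, neg_div]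

theorem lienard_iv_fails_eventual_sign_general
    (r m s n : ℕ) (a b : ℕ → ℝ)
    (hrm : r ≤ m)
    (g f F G : ℝ → ℝ)
    (hg : ∀ x : ℝ, g x = ∑ i ∈ Finset.Icc r m, a i * x ^ i)
    (hf : ∀ x : ℝ, f x = ∑ i ∈ Finset.Icc s n, b i * x ^ i)
    (hF : ∀ x : ℝ, F x = ∫ t in (0 : ℝ)..x, f t)
    (hG : ∀ x : ℝ, G x = ∫ t in (0 : ℝ)..x, g t)
    (hi : ∀ x : ℝ, x ≠ 0 → x * g x > 0)
    (hiii : (Odd m ∧ m > 2 * n + 1 ∧ a m > 0) ∨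
            (m = 2 * n + 1 ∧ 4 * (n + 1 : ℝ) * a m / (b n) ^ 2 > 1))
    (hiv : ¬ (∀ x₁ x₂ : ℝ, x₁ < 0 → 0 < x₂ → G x₁ = G x₂ → F x₁ = F x₂)) :
    ∃ K : ℝ, 0 ≤ K ∧
      ((∀ x₁ x₂ : ℝ, x₁ < 0 → 0 < x₂ → G x₁ = G x₂ → G x₂ > K → F x₁ < F x₂) ∨
       (∀ x₁ x₂ : ℝ, x₁ < 0 → 0 < x₂ → G x₁ = G x₂ → G x₂ > K → F x₁ > F x₂)) := by
  obtain ⟨hm, ham⟩ : Odd m ∧ 0 < a m := by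
    rcases hiii with ⟨hm, -, ham⟩ | ⟨rfl, h⟩
    · exact ⟨hm, ham⟩
    refine ⟨odd_two_mul_add_one n, lt_of_not_ge fun ham => h.not_ge ?_⟩
    exact (div_nonpos_of_nonpos_of_nonneg (mul_nonpos_of_nonneg_of_nonpos (by positivity) ham)
      (sq_nonneg _)).trans zero_le_one
  have hgc : Continuous g := by rw [funext hg]; fun_prop
  have hGd : ∀ x, HasDerivAt G (g x) x := fun x => by
    rw [funext hG]; exact (hgc.integral_hasStrictDerivAt 0 x).hasDerivAt
  obtain ⟨hmono, hanti⟩ := strictMonoOn_Ici_and_strictAntiOn_Iic_of_mul_pos hGd hi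
  have hGsum : ∀ x, G x = ∑ i ∈ Icc r m, a i / (i + 1) * x ^ (i + 1) := fun x => by
    simp only [hG, hg, integral_sum_mul_pow]
  have hFsum : ∀ x, F x = ∑ i ∈ Icc s n, b i / (i + 1) * x ^ (i + 1) := fun x => by
    simp only [hF, hf, integral_sum_mul_pow]
  obtain ⟨φ, H, hφ, hΨ, hH, hHΨ⟩ := exists_analytic_conjugate_of_polynomial hGsum hFsum hrm hm
    (by positivity) hmono hanti fun z hz => by
      rw [(hGd z).deriv]; exact (neg_of_mul_pos_right (hi z hz.ne) hz.le).ne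
  exact exists_eventual_sign_of_conjugate (by simp [hG]) hmono hanti hφ hΨ hH hHΨ hiv

theorem lienard_iv_fails_eventual_sign
    (r m s n : ℕ) (a b : ℕ → ℝ)
    (hr : 1 ≤ r) (hrm : r ≤ m) (hsn : s ≤ n)
    (hcoef : a r * a m * b s * b n ≠ 0)
    (g f F G : ℝ → ℝ)
    (hg : ∀ x : ℝ, g x = ∑ i ∈ Finset.Icc r m, a i * x ^ i)
    (hf : ∀ x : ℝ, f x = ∑ i ∈ Finset.Icc s n, b i * x ^ i)
    (hF : ∀ x : ℝ, F x = ∫ t in (0 : ℝ)..x, f t)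
    (hG : ∀ x : ℝ, G x = ∫ t in (0 : ℝ)..x, g t)
    (hi : ∀ x : ℝ, x ≠ 0 → x * g x > 0)
    (hiii : (Odd m ∧ m > 2 * n + 1 ∧ a m > 0) ∨
            (m = 2 * n + 1 ∧ 4 * (n + 1 : ℝ) * a m / (b n) ^ 2 > 1))
    (hiv : ¬ (∀ x₁ x₂ : ℝ, x₁ < 0 → 0 < x₂ → G x₁ = G x₂ → F x₁ = F x₂)) :
    ∃ K : ℝ, 0 ≤ K ∧
      ((∀ x₁ x₂ : ℝ, x₁ < 0 → 0 < x₂ → G x₁ = G x₂ → G x₂ > K → F x₁ < F x₂) ∨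
       (∀ x₁ x₂ : ℝ, x₁ < 0 → 0 < x₂ → G x₁ = G x₂ → G x₂ > K → F x₁ > F x₂)) :=
  lienard_iv_fails_eventual_sign_general r m s n a b hrm g f F G hg hf hF hG hi hiii hiv
end

section
/- Let g be a real polynomial with x·g(x) > 0 for all x ≠ 0, and G(x) = ∫₀ˣ g(ξ) dξ. Then for every x < 0 there exists a unique σ(x) > 0 with G(σ(x)) = G(x), and the resulting map σ : (-∞, 0) → (0, ∞) is strictly decreasing and real analytic, with σ(x) → 0 as x → 0⁻ and σ(x) → ∞ as x → -∞. -/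
/-!
Since `G' = g` is negative on `(-∞, 0)` and positive on `(0, ∞)`, and `G` is a polynomial
vanishing only at `0`, `G` maps both half-lines strictly monotonically onto `[0, ∞)`; so
`σ = (G|_{(0, ∞)})⁻¹ ∘ G` on `(-∞, 0)`, and its monotonicity and limits are read off from those
of `G`. Near `x < 0`, `σ` is the analytic local inverse of `G` at `σ x` (where `G' ≠ 0`)
composed with `G`, hence analytic.
-/

open Polynomial Set Filter Topology

theorem Polynomial.exists_derivative_eq_and_eval_zero {K : Type*} [Field K] [CharZero K]
    (g : K[X]) : ∃ P : K[X], derivative P = g ∧ P.eval 0 = 0 := by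
  induction g using Polynomial.induction_on' with
  | add p q hp hq =>
    obtain ⟨P, hP, hP0⟩ := hp
    obtain ⟨Q, hQ, hQ0⟩ := hq
    exact ⟨P + Q, by rw [derivative_add, hP, hQ], by simp [hP0, hQ0]⟩
  | monomial n a =>
    refine ⟨monomial (n + 1) (a / (n + 1)), ?_, by simp⟩
    rw [derivative_monomial]
    simp only [add_tsub_cancel_right, Nat.cast_add, Nat.cast_one]
    rw [div_mul_cancel₀ a (Nat.cast_add_one_ne_zero n)]

theorem Polynomial.integral_eval_of_derivative_eq {P g : ℝ[X]} (hP : derivative P = g) (a b : ℝ) :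
    ∫ t in a..b, g.eval t = P.eval b - P.eval a := by
  subst hP
  exact intervalIntegral.integral_eq_sub_of_hasDerivAt (fun t _ => P.hasDerivAt t)
    (P.derivative.continuous.intervalIntegrable a b)

namespace Polynomial

variable {Q : ℝ[X]}

theorem eval_derivative_pos (h : ∀ x ≠ 0, 0 < x * (derivative Q).eval x) {x : ℝ} (hx : 0 < x) :
    0 < (derivative Q).eval x :=
  pos_of_mul_pos_right (h x hx.ne') hx.le

theorem strictMonoOn_eval_Ici (h : ∀ x ≠ 0, 0 < x * (derivative Q).eval x) :
    StrictMonoOn (Q.eval ·) (Ici 0) := by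
  refine strictMonoOn_of_deriv_pos (convex_Ici 0) Q.continuousOn fun x hx => ?_
  rw [interior_Ici] at hx
  rw [Polynomial.deriv]
  exact eval_derivative_pos h hx

theorem strictAntiOn_eval_Iic (h : ∀ x ≠ 0, 0 < x * (derivative Q).eval x) :
    StrictAntiOn (Q.eval ·) (Iic 0) := by
  refine strictAntiOn_of_deriv_neg (convex_Iic 0) Q.continuousOn fun x hx => ?_
  rw [interior_Iic] at hx
  rw [Polynomial.deriv]
  exact neg_of_mul_pos_right (h x hx.ne) hx.le

theorem eval_nonneg_of_eval_zero (h : ∀ x ≠ 0, 0 < x * (derivative Q).eval x)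
    (h0 : Q.eval 0 = 0) (x : ℝ) : 0 ≤ Q.eval x := by
  rcases le_total x 0 with hx | hx
  · simpa [h0] using (strictAntiOn_eval_Iic h).antitoneOn hx self_mem_Iic hx
  · simpa [h0] using (strictMonoOn_eval_Ici h).monotoneOn self_mem_Ici hx hx

theorem degree_pos_of_mul_derivative_pos (h : ∀ x ≠ 0, 0 < x * (derivative Q).eval x) :
    0 < Q.degree := by
  refine natDegree_pos_iff_degree_pos.mp (Nat.pos_of_ne_zero fun hQ => ?_)
  simpa [derivative_of_natDegree_zero hQ] using h 1 one_ne_zero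

theorem tendsto_eval_atTop_of_eval_zero (h : ∀ x ≠ 0, 0 < x * (derivative Q).eval x)
    (h0 : Q.eval 0 = 0) : Tendsto (Q.eval ·) atTop atTop := by
  simpa only [abs_of_nonneg (eval_nonneg_of_eval_zero h h0 _)] using
    Q.abs_tendsto_atTop (degree_pos_of_mul_derivative_pos h)

theorem tendsto_eval_atBot_of_eval_zero (h : ∀ x ≠ 0, 0 < x * (derivative Q).eval x)
    (h0 : Q.eval 0 = 0) : Tendsto (Q.eval ·) atBot atTop := by
  simpa only [abs_of_nonneg (eval_nonneg_of_eval_zero h h0 _)] using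
    Q.abs_tendsto_atBot (degree_pos_of_mul_derivative_pos h)

end Polynomial

section MatchingMap

variable {F σ : ℝ → ℝ}

theorem exists_pos_apply_eq_of_neg (hc : ContinuousOn F (Ici 0)) (hanti : StrictAntiOn F (Iic 0))
    (htop : Tendsto F atTop atTop) {x : ℝ} (hx : x < 0) : ∃ y ∈ Ioi 0, F y = F x := by
  obtain ⟨b, hFb, hb⟩ := ((htop.eventually_ge_atTop (F x)).and (eventually_ge_atTop 0)).exists
  have hF0 : F 0 < F x := hanti hx.le self_mem_Iic hx
  obtain ⟨y, hy, hFy⟩ := intermediate_value_Ioc hb (hc.mono Icc_subset_Ici_self) ⟨hF0, hFb⟩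
  exact ⟨y, hy.1, hFy⟩

theorem exists_matching_map (hc : ContinuousOn F (Ici 0)) (hanti : StrictAntiOn F (Iic 0))
    (htop : Tendsto F atTop atTop) : ∃ σ : ℝ → ℝ, ∀ x < 0, 0 < σ x ∧ F (σ x) = F x := by
  choose! σ hσ using fun x (hx : x < 0) => exists_pos_apply_eq_of_neg hc hanti htop hx
  exact ⟨σ, hσ⟩

theorem eq_of_matching (hmono : StrictMonoOn F (Ici 0))
    (hσ : ∀ x < 0, 0 < σ x ∧ F (σ x) = F x) {x y : ℝ} (hx : x < 0) (hy : 0 < y)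
    (h : F y = F x) : y = σ x :=
  hmono.injOn hy.le (hσ x hx).1.le (h.trans (hσ x hx).2.symm)

theorem strictAntiOn_of_matching (hmono : StrictMonoOn F (Ici 0))
    (hσ : ∀ x < 0, 0 < σ x ∧ F (σ x) = F x) (hanti : StrictAntiOn F (Iic 0)) :
    StrictAntiOn σ (Iio 0) := by
  intro a ha b hb hab
  have : F (σ b) < F (σ a) := by
    rw [(hσ a ha).2, (hσ b hb).2]
    exact hanti (mem_Iic.mpr ha.le) (mem_Iic.mpr hb.le) hab
  exact (hmono.lt_iff_lt (hσ b hb).1.le (hσ a ha).1.le).1 this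

theorem tendsto_nhdsLT_zero_of_matching (hmono : StrictMonoOn F (Ici 0))
    (hσ : ∀ x < 0, 0 < σ x ∧ F (σ x) = F x) (hc : ContinuousAt F 0) :
    Tendsto σ (𝓝[<] 0) (𝓝 0) := by
  refine tendsto_order.2 ⟨fun a ha => ?_, fun a ha => ?_⟩
  · filter_upwards [self_mem_nhdsWithin] with x hx
    exact ha.trans (hσ x hx).1
  · have hFa : ∀ᶠ x in 𝓝 0, F x < F a :=
      hc.eventually (gt_mem_nhds (hmono self_mem_Ici ha.le ha))
    filter_upwards [nhdsWithin_le_nhds hFa, self_mem_nhdsWithin] with x hx hxneg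
    rw [← (hσ x hxneg).2] at hx
    exact (hmono.lt_iff_lt (hσ x hxneg).1.le ha.le).1 hx

theorem tendsto_atBot_of_matching (hmono : StrictMonoOn F (Ici 0))
    (hσ : ∀ x < 0, 0 < σ x ∧ F (σ x) = F x)
    (hbot : Tendsto F atBot atTop) : Tendsto σ atBot atTop := by
  refine tendsto_atTop.2 fun c => ?_
  filter_upwards [hbot.eventually_ge_atTop (F (max c 0)), eventually_lt_atBot 0] with x hx hxneg
  rw [← (hσ x hxneg).2] at hx
  exact (le_max_left c 0).trans ((hmono.le_iff_le (le_max_right c 0) (hσ x hxneg).1.le).1 hx)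

theorem analyticAt_of_matching (hmono : StrictMonoOn F (Ici 0))
    (hσ : ∀ x < 0, 0 < σ x ∧ F (σ x) = F x)
    (hF : ∀ y, AnalyticAt ℝ F y) (hF' : ∀ y > 0, deriv F y ≠ 0)
    {x : ℝ} (hx : x < 0) : AnalyticAt ℝ σ x := by
  obtain ⟨hpos, hFσ⟩ := hσ x hx
  have hstrict := (hF (σ x)).hasStrictDerivAt
  set r := hstrict.localInverse _ _ _ (hF' _ hpos)
  have hr : AnalyticAt ℝ r (F x) := hFσ ▸ (hF (σ x)).analyticAt_localInverse (hF' _ hpos)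
  have hrσ : r (F (σ x)) = σ x := HasStrictFDerivAt.localInverse_apply_image ..
  have hr_cont : ContinuousAt r (F (σ x)) :=
    (hstrict.to_localInverse (hF' _ hpos)).hasDerivAt.continuousAt
  have hnear : ∀ᶠ y in 𝓝 (F x), F (r y) = y ∧ 0 < r y := by
    rw [← hFσ]
    exact (hstrict.eventually_right_inverse (hF' _ hpos)).and
      (hr_cont.eventually (lt_mem_nhds (by rwa [hrσ])))
  have hσr : r ∘ F =ᶠ[𝓝 x] σ := by
    filter_upwards [(hF x).continuousAt.eventually hnear, Iio_mem_nhds hx] with x' h hx'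
    exact eq_of_matching hmono hσ hx' h.2 h.1
  exact (hr.comp (hF x)).congr hσr

end MatchingMap

theorem matching_map_sigma_properties
    (g : Polynomial ℝ)
    (hgpos : ∀ x : ℝ, x ≠ 0 → x * g.eval x > 0)
    (G : ℝ → ℝ)
    (hG : ∀ x : ℝ, G x = ∫ t in (0 : ℝ)..x, g.eval t) :
    ∃ σ : ℝ → ℝ,
      (∀ x : ℝ, x < 0 → (σ x > 0 ∧ G (σ x) = G x ∧ ∀ y : ℝ, y > 0 → G y = G x → y = σ x)) ∧
      StrictAntiOn σ (Set.Iio 0) ∧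
      AnalyticOnNhd ℝ σ (Set.Iio 0) ∧
      Filter.Tendsto σ (nhdsWithin 0 (Set.Iio 0)) (nhds 0) ∧
      Filter.Tendsto σ Filter.atBot Filter.atTop := by
  obtain ⟨Q, hQg, hQ0⟩ := g.exists_derivative_eq_and_eval_zero
  obtain rfl : G = (Q.eval ·) := funext fun x => by
    rw [hG, integral_eval_of_derivative_eq hQg, hQ0, sub_zero]
  subst hQg
  have hmono := strictMonoOn_eval_Ici hgpos
  have hanti := strictAntiOn_eval_Iic hgpos
  obtain ⟨σ, hσ⟩ :=
    exists_matching_map Q.continuousOn hanti (tendsto_eval_atTop_of_eval_zero hgpos hQ0)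
  have hanalytic : ∀ y, AnalyticAt ℝ (Q.eval ·) y :=
    fun y => AnalyticOnNhd.eval_polynomial Q y (mem_univ y)
  have hderiv : ∀ y > 0, deriv (Q.eval ·) y ≠ 0 := fun y hy => by
    rw [Polynomial.deriv]
    exact (eval_derivative_pos hgpos hy).ne'
  refine ⟨σ, fun x hx => ⟨(hσ x hx).1, (hσ x hx).2, fun y hy => eq_of_matching hmono hσ hx hy⟩,
    strictAntiOn_of_matching hmono hσ hanti,
    fun x hx => analyticAt_of_matching hmono hσ hanalytic hderiv hx,
    tendsto_nhdsLT_zero_of_matching hmono hσ Q.continuous.continuousAt,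
    tendsto_atBot_of_matching hmono hσ (tendsto_eval_atBot_of_eval_zero hgpos hQ0)⟩
end

section
/- Let g be a real polynomial of degree 5 with x·g(x) > 0 for all x ≠ 0, and let f be a real polynomial of degree exactly 2. Then condition (iv) fails: there exist x₁ < 0 < x₂ with G(x₁) = G(x₂) and F(x₁) ≠ F(x₂). -/
/-!
`G` is a polynomial antiderivative of `g`; since `g` has the sign of `x`, `G` has a strict minimum
at `0`, and being nonconstant it tends to `+∞` on both sides. By the intermediate value theorem,
every value `G x₂` with `x₂` large is also taken at some `x₁` arbitrarily far to the left. `F` is a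
cubic, so it has opposite signs far to the left and far to the right, whence `F x₁ ≠ F x₂`.
-/

open Polynomial Filter Set

namespace Polynomial

theorem exists_derivative_eq {K : Type*} [Field K] [CharZero K] (p : K[X]) :
    ∃ P : K[X], derivative P = p := by
  induction p using Polynomial.induction_on' with
  | add p q hp hq =>
    obtain ⟨P, rfl⟩ := hp
    obtain ⟨Q, rfl⟩ := hq
    exact ⟨P + Q, derivative_add⟩
  | monomial n a =>
    refine ⟨monomial (n + 1) (a / (n + 1)), ?_⟩
    rw [derivative_monomial, Nat.add_sub_cancel]
    push_cast
    field_simp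

theorem exists_derivative_eq_and_eval_eq_integral (p : ℝ[X]) :
    ∃ P : ℝ[X], derivative P = p ∧ ∀ x, P.eval x = ∫ t in (0 : ℝ)..x, p.eval t := by
  obtain ⟨P, hP⟩ := p.exists_derivative_eq
  refine ⟨P - C (P.eval 0), by simp [hP], fun x => ?_⟩
  have hderiv : _root_.deriv (fun x => P.eval x) = fun x => P.derivative.eval x := by
    ext; exact P.deriv
  rw [← hP, intervalIntegral.integral_deriv_eq_sub' _ hderiv (fun _ _ => P.differentiableAt)
    P.derivative.continuous.continuousOn]
  simp

theorem tendsto_atBot_of_odd_natDegree {P : ℝ[X]} (hodd : Odd P.natDegree)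
    (hP : 0 < P.leadingCoeff) : Tendsto (fun x => P.eval x) atBot atBot := by
  have hdeg : 0 < P.degree := natDegree_pos_iff_degree_pos.mp hodd.pos
  have hneg : Tendsto (fun x => (P.comp (-X)).eval x) atTop atBot := by
    refine tendsto_atBot_of_leadingCoeff_nonpos _ (by simpa [natDegree_comp] using hdeg) ?_
    rw [comp_neg_X_leadingCoeff_eq, hodd.neg_one_pow]
    linarith
  simpa [Function.comp_def] using hneg.comp tendsto_neg_atBot_atTop

theorem eventually_eval_ne_of_odd_natDegree {P : ℝ[X]} (hodd : Odd P.natDegree) :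
    ∀ᶠ p in atBot ×ˢ atTop, P.eval p.1 ≠ P.eval p.2 := by
  wlog hP : 0 < P.leadingCoeff generalizing P
  · have hP0 : P ≠ 0 := by rintro rfl; simp at hodd
    have hnegP : 0 < (-P).leadingCoeff := by
      rw [leadingCoeff_neg]
      exact neg_pos.mpr ((not_lt.mp hP).lt_of_ne (leadingCoeff_ne_zero.mpr hP0))
    filter_upwards [this (by rwa [natDegree_neg]) hnegP] with p hp
    simpa using hp
  have hdeg : 0 < P.degree := natDegree_pos_iff_degree_pos.mp hodd.pos
  filter_upwards [((tendsto_atBot_of_odd_natDegree hodd hP).eventually_lt_atBot 0).prod_mk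
    ((P.tendsto_atTop_of_leadingCoeff_nonneg hdeg hP.le).eventually_gt_atTop 0)] with p hp
  exact (hp.1.trans hp.2).ne

theorem tendsto_atTop_of_degree_pos_of_eval_pos {P : ℝ[X]} (hdeg : 0 < P.degree)
    (hpos : ∀ x ≠ 0, 0 < P.eval x) :
    Tendsto (fun x => P.eval x) atBot atTop ∧ Tendsto (fun x => P.eval x) atTop atTop := by
  constructor
  · refine (P.abs_tendsto_atBot hdeg).congr' ?_
    filter_upwards [eventually_lt_atBot 0] with x hx
    exact abs_of_pos (hpos x hx.ne)
  · refine (P.abs_tendsto_atTop hdeg).congr' ?_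
    filter_upwards [eventually_gt_atTop 0] with x hx
    exact abs_of_pos (hpos x hx.ne')

end Polynomial

theorem apply_zero_lt_of_mul_deriv_pos {f : ℝ → ℝ} (hf : Differentiable ℝ f)
    (hf' : ∀ x ≠ 0, 0 < x * deriv f x) {x : ℝ} (hx : x ≠ 0) : f 0 < f x := by
  rcases hx.lt_or_gt with hx | hx
  · refine strictAntiOn_of_deriv_neg (convex_Iic 0) hf.continuous.continuousOn
      (fun y hy => ?_) hx.le self_mem_Iic hx
    rw [interior_Iic] at hy
    exact neg_of_mul_pos_right (hf' y hy.ne) hy.le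
  · refine strictMonoOn_of_deriv_pos (convex_Ici 0) hf.continuous.continuousOn
      (fun y hy => ?_) self_mem_Ici hx.le hx
    rw [interior_Ici] at hy
    exact pos_of_mul_pos_right (hf' y hy.ne') hy.le

theorem frequently_atBot_prod_atTop_apply_eq {G : ℝ → ℝ} (hG : Continuous G)
    (hbot : Tendsto G atBot atTop) (htop : Tendsto G atTop atTop) :
    ∃ᶠ p in atBot ×ˢ atTop, G p.1 = G p.2 := by
  refine (atBot_basis.prod atTop_basis).frequently_iff.mpr fun ⟨a, b⟩ _ => ?_
  obtain ⟨x₂, hx₂, hbx₂⟩ := ((htop.eventually_gt_atTop (G a)).and (eventually_ge_atTop b)).exists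
  obtain ⟨y, hy, hya⟩ := ((hbot.eventually_ge_atTop (G x₂)).and (eventually_le_atBot a)).exists
  obtain ⟨x₁, hx₁, hGx₁⟩ := intermediate_value_Icc' hya hG.continuousOn ⟨hx₂.le, hy⟩
  exact ⟨(x₁, x₂), ⟨hx₁.2, hbx₂⟩, hGx₁⟩

theorem condition_iv_fails_for_quadratic_f_general
    (g f : Polynomial ℝ)
    (hgpos : ∀ x : ℝ, x ≠ 0 → x * g.eval x > 0)
    (hfdeg : f.natDegree = 2)
    (F G : ℝ → ℝ)
    (hF : ∀ x : ℝ, F x = ∫ t in (0 : ℝ)..x, f.eval t)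
    (hG : ∀ x : ℝ, G x = ∫ t in (0 : ℝ)..x, g.eval t) :
    ∃ x₁ x₂ : ℝ, x₁ < 0 ∧ 0 < x₂ ∧ G x₁ = G x₂ ∧ F x₁ ≠ F x₂ := by
  obtain ⟨PG, hPG_deriv, hPG⟩ := g.exists_derivative_eq_and_eval_eq_integral
  obtain ⟨PF, hPF_deriv, hPF⟩ := f.exists_derivative_eq_and_eval_eq_integral
  obtain rfl : G = fun x => PG.eval x := funext fun x => (hG x).trans (hPG x).symm
  obtain rfl : F = fun x => PF.eval x := funext fun x => (hF x).trans (hPF x).symm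
  have hPG0 : PG.eval 0 = 0 := by simp [hPG]
  have hPGpos : ∀ x ≠ 0, 0 < PG.eval x := fun x hx => hPG0 ▸
    apply_zero_lt_of_mul_deriv_pos PG.differentiable (by simpa [hPG_deriv] using hgpos) hx
  have hPGdeg : 0 < PG.degree := by
    refine natDegree_pos_iff_degree_pos.mp (Nat.pos_of_ne_zero fun h => ?_)
    have hg1 := hgpos 1 one_ne_zero
    simp [← hPG_deriv, derivative_eq_zero.mpr h] at hg1
  have hPFodd : Odd PF.natDegree := by
    have hdeg := PF.natDegree_derivative
    rw [hPF_deriv, hfdeg] at hdeg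
    exact ⟨1, by omega⟩
  obtain ⟨hbot, htop⟩ := tendsto_atTop_of_degree_pos_of_eval_pos hPGdeg hPGpos
  obtain ⟨⟨x₁, x₂⟩, hGx, hFx, hx₁, hx₂⟩ :=
    ((frequently_atBot_prod_atTop_apply_eq PG.continuous hbot htop).and_eventually
      ((PF.eventually_eval_ne_of_odd_natDegree hPFodd).and
        ((eventually_lt_atBot 0).prod_mk (eventually_gt_atTop 0)))).exists
  exact ⟨x₁, x₂, hx₁, hx₂, hGx, hFx⟩

theorem condition_iv_fails_for_quadratic_f
    (g f : Polynomial ℝ)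
    (hgdeg : g.natDegree = 5)
    (hgpos : ∀ x : ℝ, x ≠ 0 → x * g.eval x > 0)
    (hfdeg : f.natDegree = 2)
    (F G : ℝ → ℝ)
    (hF : ∀ x : ℝ, F x = ∫ t in (0 : ℝ)..x, f.eval t)
    (hG : ∀ x : ℝ, G x = ∫ t in (0 : ℝ)..x, g.eval t) :
    ∃ x₁ x₂ : ℝ, x₁ < 0 ∧ 0 < x₂ ∧ G x₁ = G x₂ ∧ F x₁ ≠ F x₂ :=
  condition_iv_fails_for_quadratic_f_general g f hgpos hfdeg F G hF hG
end
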